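/- arXiv:math/0410113 — 6 statements merged into one kernel-verified Lean document; each statement's English description precedes it below -/
import Mathlib

section
/- Let λ ∈ ℝ, let G be the generator of a strongly continuous, positive, λ-contractive semigroup on C(E), let α, β ∈ C(E) with α ≥ 0, let T > 0 and f ∈ D(G). Suppose u : [0,T] → C(E) is continuously differentiable with u_0 = f, u_t ∈ D(G) for all t ∈ [0,T], and ∂u_t/∂t = G u_t + β u_t − α u_t² for all t ∈ [0,T]; and suppose ũ : [0,T] → C(E) is continuously differentiable with ũ_t ∈ D(G) for all t ∈ [0,T], ∂ũ_t/∂t ≤ G ũ_t + β ũ_t − α ũ_t² (pointwise on E) for all t ∈ [0,T], and ũ_0 ≤ f. Then ũ_T ≤ u_T. The same conclusion with the reversed inequality (ũ_T ≥ u_T) holds if instead ∂ũ_t/∂t ≥ G ũ_t + β ũ_t − α ũ_t² for all t ∈ [0,T] and ũ_0 ≥ f. -/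
/-!
If `a` is a subsolution and `b` a supersolution, then `w = a - b` satisfies
`∂w/∂t ≤ G w + (β - α (a + b)) w`, and the coefficient `β - α (a + b)` is bounded on `[0, T]`,
say by `C`. Positivity and `l`-contractivity of the semigroup give the positive maximum
principle `G g x ≤ l g x` at a point `x` where `g` attains a nonnegative maximum. Hence
`∂w/∂t ≤ (l + C) w` at every positive spatial maximum of `w`, and comparing `w` with
`ε e^{(l + C + 1) t}` at the first time the two touch shows that `w` stays below it.
Letting `ε → 0` gives `w ≤ 0`, i.e. `a ≤ b`.
-/

open Filter Topology Set MeasureTheory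

variable {E : Type*} [TopologicalSpace E] [CompactSpace E] [TopologicalSpace.MetrizableSpace E] [Nonempty E]

/-- `S` is a semigroup of bounded linear operators on `C(E, ℝ)`:
`S 0 = id` and `S (s+t) = S s ∘ S t` for `s, t ≥ 0`. -/
def IsSemigroupOn (S : ℝ → C(E, ℝ) →L[ℝ] C(E, ℝ)) : Prop :=
  S 0 = ContinuousLinearMap.id ℝ C(E, ℝ) ∧
    ∀ s t : ℝ, 0 ≤ s → 0 ≤ t → S (s + t) = (S s).comp (S t)

/-- Strong continuity: `‖S t f - f‖ → 0` as `t ↓ 0`, for every `f`. -/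
def StronglyContinuousSG (S : ℝ → C(E, ℝ) →L[ℝ] C(E, ℝ)) : Prop :=
  ∀ f : C(E, ℝ), Tendsto (fun t : ℝ => S t f) (𝓝[>] (0 : ℝ)) (𝓝 f)

/-- Positivity: `f ≥ 0` implies `S t f ≥ 0` for all `t ≥ 0`. -/
def PositiveSG (S : ℝ → C(E, ℝ) →L[ℝ] C(E, ℝ)) : Prop :=
  ∀ t : ℝ, 0 ≤ t → ∀ f : C(E, ℝ), 0 ≤ f → 0 ≤ S t f

/-- `l`-contractivity: `‖S t f‖ ≤ exp (l * t) * ‖f‖` for all `t ≥ 0`. -/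
def ContractiveSG (l : ℝ) (S : ℝ → C(E, ℝ) →L[ℝ] C(E, ℝ)) : Prop :=
  ∀ t : ℝ, 0 ≤ t → ∀ f : C(E, ℝ), ‖S t f‖ ≤ Real.exp (l * t) * ‖f‖

/-- `(D, G)` is the generator of `S`: for `f ∈ D`, `t⁻¹ • (S t f - f) → G f` as `t ↓ 0`
(in supremum norm), and `D` consists exactly of those `f` for which this limit exists. -/
def IsGeneratorOf (S : ℝ → C(E, ℝ) →L[ℝ] C(E, ℝ)) (D : Set C(E, ℝ))
    (G : C(E, ℝ) → C(E, ℝ)) : Prop :=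
  (∀ f ∈ D, Tendsto (fun t : ℝ => t⁻¹ • (S t f - f)) (𝓝[>] (0 : ℝ)) (𝓝 (G f))) ∧
    ∀ f : C(E, ℝ),
      (∃ g : C(E, ℝ), Tendsto (fun t : ℝ => t⁻¹ • (S t f - f)) (𝓝[>] (0 : ℝ)) (𝓝 g)) → f ∈ D

/-- A Feller semigroup: strongly continuous positive semigroup with `S t 1 = 1`. -/
def IsFellerSG (S : ℝ → C(E, ℝ) →L[ℝ] C(E, ℝ)) : Prop :=
  IsSemigroupOn S ∧ StronglyContinuousSG S ∧ PositiveSG S ∧ ∀ t : ℝ, 0 ≤ t → S t 1 = 1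

/-- A mild solution of `∂u/∂t = G u + b u - a u²`, `u 0 = f`, relative to the semigroup `S`:
a continuous map `u : [0,∞) → C(E,ℝ)` with
`u t = S t f + ∫₀ᵗ S (t-s) (b * u s - a * (u s)²) ds` for all `t ≥ 0`. -/
def IsMildSolution (S : ℝ → C(E, ℝ) →L[ℝ] C(E, ℝ)) (a b f : C(E, ℝ))
    (u : ℝ → C(E, ℝ)) : Prop :=
  ContinuousOn u (Ici 0) ∧
    ∀ t : ℝ, 0 ≤ t → u t = S t f + ∫ s in (0 : ℝ)..t, S (t - s) (b * u s - a * u s ^ 2)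

theorem HasDerivWithinAt.nonneg_of_isMaxOn_Icc {g : ℝ → ℝ} {g' a b : ℝ} (hab : a < b)
    (hg : HasDerivWithinAt g g' (Icc a b) b) (hmax : IsMaxOn g (Icc a b) b) : 0 ≤ g' := by
  have hcone : a - b ∈ posTangentConeAt (Icc a b) b :=
    sub_mem_posTangentConeAt_of_segment_subset (by rw [segment_symm, segment_eq_Icc hab.le])
  have h := hmax.localize.hasFDerivWithinAt_nonpos hg hcone
  rw [ContinuousLinearMap.toSpanSingleton_apply, smul_eq_mul] at h
  exact nonneg_of_mul_nonpos_right h (sub_neg.2 hab)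

theorem HasDerivWithinAt.eq_zero_and_nonneg_of_neg_on_Ico {g : ℝ → ℝ} {g' a b : ℝ}
    (hab : a < b) (hg : HasDerivWithinAt g g' (Icc a b) b) (hneg : ∀ s ∈ Ico a b, g s < 0)
    (hb : 0 ≤ g b) :
    g b = 0 ∧ 0 ≤ g' := by
  have hb0 : g b = 0 := by
    refine le_antisymm ?_ hb
    refine ContinuousWithinAt.closure_le (s := Ico a b) (by simp [closure_Ico hab.ne, hab.le])
      (hg.continuousWithinAt.mono Ico_subset_Icc_self) continuousWithinAt_const
      fun s hs => (hneg s hs).le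
  refine ⟨hb0, hg.nonneg_of_isMaxOn_Icc hab (isMaxOn_iff.2 fun s hs => ?_)⟩
  rcases hs.2.lt_or_eq with hsb | rfl
  · exact (hneg s ⟨hs.1, hsb⟩).le.trans hb0.ge
  · exact le_rfl

section MaximumPrinciple

variable {X : Type*} [TopologicalSpace X] [CompactSpace X]

theorem ContinuousMap.isOpen_setOf_forall_lt_zero : IsOpen {g : C(X, ℝ) | ∀ x, g x < 0} := by
  simpa only [range_subset_iff, mem_Iio] using
    ContinuousMap.isOpen_setOfPred_range_subset (X := X) (isOpen_Iio (a := (0 : ℝ)))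

theorem exists_first_nonneg {φ : ℝ → C(X, ℝ)} {T : ℝ} (hφ : ContinuousOn φ (Icc 0 T))
    (h0 : ∀ x, φ 0 x < 0) (hT : ∃ t ∈ Icc 0 T, ∃ x, 0 ≤ φ t x) :
    ∃ τ ∈ Ioc 0 T, (∃ x, 0 ≤ φ τ x) ∧ ∀ s ∈ Ico 0 τ, ∀ x, φ s x < 0 := by
  set A := Icc 0 T ∩ φ ⁻¹' {g : C(X, ℝ) | ∀ x, g x < 0}ᶜ
  have hA : IsClosed A := hφ.preimage_isClosed_of_isClosed isClosed_Icc
    ContinuousMap.isOpen_setOf_forall_lt_zero.isClosed_compl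
  have hmem : ∀ t, t ∈ A ↔ t ∈ Icc 0 T ∧ ∃ x, 0 ≤ φ t x := by
    simp [A]
  have hbdd : BddBelow A := ⟨0, fun t ht => ht.1.1⟩
  obtain ⟨hτI, hτx⟩ := (hmem _).1 (hA.csInf_mem (hT.imp fun t ht => (hmem t).2 ht) hbdd)
  refine ⟨sInf A, ⟨lt_of_le_of_ne hτI.1 fun h => ?_, hτI.2⟩, hτx, fun s hs x => ?_⟩
  · obtain ⟨x, hx⟩ := hτx
    exact (h0 x).not_ge (h ▸ hx)
  · by_contra! hx
    exact notMem_of_lt_csInf hs.2 hbdd ((hmem s).2 ⟨⟨hs.1, hs.2.le.trans hτI.2⟩, x, hx⟩)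

theorem lt_mul_exp_of_hasDerivWithinAt_of_isMaxOn {w w' : ℝ → C(X, ℝ)} {T K K' ε : ℝ}
    (hw : ∀ t ∈ Icc 0 T, HasDerivWithinAt w (w' t) (Icc 0 T) t)
    (hmax : ∀ t ∈ Icc 0 T, ∀ x, IsMaxOn (w t) univ x → 0 < w t x → w' t x ≤ K * w t x)
    (h0 : w 0 ≤ 0) (hε : 0 < ε) (hK : K < K') :
    ∀ t ∈ Icc 0 T, ∀ x, w t x < ε * Real.exp (K' * t) := by
  set c : ℝ → ℝ := fun t => ε * Real.exp (K' * t)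
  have hc : ∀ t, HasDerivAt c (K' * c t) t := fun t => by
    simpa [c, mul_comm, mul_left_comm] using ((hasDerivAt_id t).const_mul K').exp.const_mul ε
  by_contra! hcross
  set φ : ℝ → C(X, ℝ) := fun t => w t - ContinuousLinearMap.const ℝ X (c t)
  have hφ : ContinuousOn φ (Icc 0 T) :=
    ContinuousOn.sub (fun t ht => (hw t ht).continuousWithinAt)
      ((ContinuousLinearMap.const ℝ X).continuous.comp
        (continuous_iff_continuousAt.2 fun t => (hc t).continuousAt)).continuousOn
  obtain ⟨τ, hτ, ⟨x₁, hx₁⟩, hbefore⟩ := exists_first_nonneg hφ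
    (fun x => by simpa [φ, c] using (h0 x).trans_lt (by positivity))
    (by simpa [φ, sub_nonneg] using hcross)
  have hτI : τ ∈ Icc 0 T := ⟨hτ.1.le, hτ.2⟩
  obtain ⟨x₀, -, hx₀⟩ :=
    isCompact_univ.exists_isMaxOn ⟨x₁, mem_univ _⟩ (w τ).continuous.continuousOn
  have hwx : HasDerivWithinAt (fun s => w s x₀) (w' τ x₀) (Icc 0 T) τ := by
    have := (ContinuousMap.evalCLM ℝ x₀).hasFDerivAt.comp_hasDerivWithinAt τ (hw τ hτI)
    exact this
  have hτx₀ : 0 ≤ w τ x₀ - c τ := by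
    simp only [φ, ContinuousMap.sub_apply, sub_nonneg] at hx₁
    exact sub_nonneg.2 (hx₁.trans (hx₀ (mem_univ x₁)))
  obtain ⟨hwτ, hslope⟩ := ((hwx.sub (hc τ).hasDerivWithinAt).mono (Icc_subset_Icc_right hτ.2)
    ).eq_zero_and_nonneg_of_neg_on_Ico hτ.1 (fun s hs => hbefore s hs x₀) hτx₀
  rw [Pi.sub_apply, sub_eq_zero] at hwτ
  have hcτ : 0 < c τ := by positivity
  have := hmax τ hτI x₀ hx₀ (hwτ ▸ hcτ)
  rw [hwτ] at this
  linarith [mul_lt_mul_of_pos_right hK hcτ]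

theorem nonpos_of_hasDerivWithinAt_of_isMaxOn {w w' : ℝ → C(X, ℝ)} {T K : ℝ}
    (hw : ∀ t ∈ Icc 0 T, HasDerivWithinAt w (w' t) (Icc 0 T) t)
    (hmax : ∀ t ∈ Icc 0 T, ∀ x, IsMaxOn (w t) univ x → 0 < w t x → w' t x ≤ K * w t x)
    (h0 : w 0 ≤ 0) : ∀ t ∈ Icc 0 T, w t ≤ 0 := by
  intro t ht x
  refine le_of_forall_pos_lt_add fun δ hδ => ?_
  have := lt_mul_exp_of_hasDerivWithinAt_of_isMaxOn hw hmax h0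
    (div_pos hδ (Real.exp_pos ((K + 1) * t))) (lt_add_one K) t ht x
  rwa [div_mul_cancel₀ _ (Real.exp_pos _).ne', ← zero_add δ] at this

end MaximumPrinciple

section Semigroup

variable {X : Type*} [TopologicalSpace X]
  {S : ℝ → C(X, ℝ) →L[ℝ] C(X, ℝ)} {D : Set C(X, ℝ)} {G : C(X, ℝ) → C(X, ℝ)}

theorem PositiveSG.apply_mono (hpos : PositiveSG S) {t : ℝ} (ht : 0 ≤ t) {f g : C(X, ℝ)}
    (hfg : f ≤ g) : S t f ≤ S t g := by
  have := hpos t ht (g - f) (sub_nonneg.2 hfg)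
  rwa [map_sub, sub_nonneg] at this

namespace IsGeneratorOf

theorem tendsto_sub (hgen : IsGeneratorOf S D G) {f g : C(X, ℝ)} (hf : f ∈ D) (hg : g ∈ D) :
    Tendsto (fun t : ℝ => t⁻¹ • (S t (f - g) - (f - g))) (𝓝[>] 0) (𝓝 (G f - G g)) :=
  ((hgen.1 f hf).sub (hgen.1 g hg)).congr fun t => by
    rw [map_sub, ← smul_sub, sub_sub_sub_comm]

theorem sub_mem (hgen : IsGeneratorOf S D G) {f g : C(X, ℝ)} (hf : f ∈ D) (hg : g ∈ D) :
    f - g ∈ D :=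
  hgen.2 _ ⟨_, hgen.tendsto_sub hf hg⟩

theorem map_sub (hgen : IsGeneratorOf S D G) {f g : C(X, ℝ)} (hf : f ∈ D) (hg : g ∈ D) :
    G (f - g) = G f - G g :=
  tendsto_nhds_unique (hgen.1 _ (hgen.sub_mem hf hg)) (hgen.tendsto_sub hf hg)

theorem apply_le_mul_of_isMaxOn [CompactSpace X] {l : ℝ} (hgen : IsGeneratorOf S D G)
    (hpos : PositiveSG S) (hcon : ContractiveSG l S) {g : C(X, ℝ)} (hg : g ∈ D) {x : X}
    (hx : IsMaxOn g univ x) (hgx : 0 ≤ g x) : G g x ≤ l * g x := by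
  have : Nonempty X := ⟨x⟩
  have hbound : ∀ t, 0 < t → S t g x ≤ Real.exp (l * t) * g x := fun t ht => by
    have hle : g ≤ g x • 1 := fun y => by simpa using hx (mem_univ y)
    have h1 : S t 1 x ≤ Real.exp (l * t) := calc
      S t 1 x ≤ ‖S t 1‖ := (S t 1).apply_le_norm x
      _ ≤ Real.exp (l * t) * ‖(1 : C(X, ℝ))‖ := hcon t ht.le 1
      _ = Real.exp (l * t) := by rw [norm_one, mul_one]
    calc S t g x ≤ S t (g x • 1) x := hpos.apply_mono ht.le hle x
      _ = g x * S t 1 x := by simp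
      _ ≤ Real.exp (l * t) * g x := by rw [mul_comm]; exact mul_le_mul_of_nonneg_right h1 hgx
  have hL : Tendsto (fun t : ℝ => (t⁻¹ • (S t g - g)) x) (𝓝[>] 0) (𝓝 (G g x)) :=
    ((ContinuousMap.evalCLM ℝ x).continuous.tendsto _).comp (hgen.1 g hg)
  have hR : Tendsto (fun t : ℝ => t⁻¹ * (Real.exp (l * t) - 1) * g x) (𝓝[>] 0)
      (𝓝 (l * g x)) := by
    simpa using ((hasDerivAt_id (0 : ℝ)).const_mul l).exp.tendsto_slope_zero_right.mul_const (g x)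
  refine le_of_tendsto_of_tendsto hL hR (eventually_nhdsWithin_of_forall fun t (ht : 0 < t) => ?_)
  simp only [ContinuousMap.smul_apply, ContinuousMap.sub_apply, smul_eq_mul, mul_assoc]
  exact mul_le_mul_of_nonneg_left (by linarith [hbound t ht]) (inv_nonneg.2 ht.le)

end IsGeneratorOf

end Semigroup

theorem subsolution_le_supersolution {X : Type*} [TopologicalSpace X] [CompactSpace X] {l : ℝ}
    {S : ℝ → C(X, ℝ) →L[ℝ] C(X, ℝ)} {D : Set C(X, ℝ)} {G : C(X, ℝ) → C(X, ℝ)}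
    (hpos : PositiveSG S) (hcon : ContractiveSG l S) (hgen : IsGeneratorOf S D G)
    (α β : C(X, ℝ)) {T : ℝ} (hT : 0 ≤ T) {a b a' b' : ℝ → C(X, ℝ)}
    (haD : ∀ t ∈ Icc 0 T, a t ∈ D) (hbD : ∀ t ∈ Icc 0 T, b t ∈ D)
    (ha : ∀ t ∈ Icc 0 T, HasDerivWithinAt a (a' t) (Icc 0 T) t)
    (hb : ∀ t ∈ Icc 0 T, HasDerivWithinAt b (b' t) (Icc 0 T) t)
    (hsub : ∀ t ∈ Icc 0 T, a' t ≤ G (a t) + β * a t - α * a t ^ 2)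
    (hsup : ∀ t ∈ Icc 0 T, G (b t) + β * b t - α * b t ^ 2 ≤ b' t)
    (h0 : a 0 ≤ b 0) : a T ≤ b T := by
  have hcoeff : ContinuousOn (fun t => β - α * (a t + b t)) (Icc 0 T) :=
    continuousOn_const.sub (continuousOn_const.mul (ContinuousOn.add
      (fun t ht => (ha t ht).continuousWithinAt) fun t ht => (hb t ht).continuousWithinAt))
  obtain ⟨C, hC⟩ := isCompact_Icc.exists_bound_of_continuousOn hcoeff
  have hmax : ∀ t ∈ Icc 0 T, ∀ x, IsMaxOn ((a - b) t) univ x → 0 < (a - b) t x →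
      (a' - b') t x ≤ (l + C) * (a - b) t x := by
    intro t ht x hx hpos'
    have hG := hgen.apply_le_mul_of_isMaxOn hpos hcon (hgen.sub_mem (haD t ht) (hbD t ht)) hx
      hpos'.le
    have hc : β x - α x * (a t x + b t x) ≤ C :=
      (le_abs_self _).trans ((ContinuousMap.norm_coe_le_norm _ x).trans (hC t ht))
    simp only [Pi.sub_apply, ContinuousMap.sub_apply, hgen.map_sub (haD t ht) (hbD t ht)]
      at hG hpos' ⊢
    have ha' := ContinuousMap.le_def.1 (hsub t ht) x
    have hb' := ContinuousMap.le_def.1 (hsup t ht) x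
    simp only [ContinuousMap.sub_apply, ContinuousMap.add_apply, ContinuousMap.mul_apply,
      ContinuousMap.pow_apply] at ha' hb'
    linarith [mul_le_mul_of_nonneg_right hc hpos'.le]
  have := nonpos_of_hasDerivWithinAt_of_isMaxOn (fun t ht => (ha t ht).sub (hb t ht)) hmax
    (sub_nonpos.2 h0) T ⟨hT, le_rfl⟩
  exact sub_nonpos.1 this

theorem statement2_general (l : ℝ) (S : ℝ → C(E, ℝ) →L[ℝ] C(E, ℝ))
    (D : Set C(E, ℝ)) (G : C(E, ℝ) → C(E, ℝ))
    (hpos : PositiveSG S)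
    (hcon : ContractiveSG l S) (hgen : IsGeneratorOf S D G)
    (α β : C(E, ℝ))
    (T : ℝ) (hT : 0 < T) (f : C(E, ℝ))
    -- `u` is a classical solution on `[0, T]` with `u 0 = f`
    (u : ℝ → C(E, ℝ)) (hu0 : u 0 = f) (huD : ∀ t ∈ Icc (0 : ℝ) T, u t ∈ D)
    (hu' : ∀ t ∈ Icc (0 : ℝ) T,
      HasDerivWithinAt u (G (u t) + β * u t - α * u t ^ 2) (Icc 0 T) t) :
    -- subsolutions stay below `u`
    (∀ v v' : ℝ → C(E, ℝ),
      (∀ t ∈ Icc (0 : ℝ) T, v t ∈ D) →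
      ContinuousOn v' (Icc 0 T) →
      (∀ t ∈ Icc (0 : ℝ) T, HasDerivWithinAt v (v' t) (Icc 0 T) t) →
      (∀ t ∈ Icc (0 : ℝ) T, v' t ≤ G (v t) + β * v t - α * v t ^ 2) →
      v 0 ≤ f → v T ≤ u T) ∧
    -- supersolutions stay above `u`
    (∀ v v' : ℝ → C(E, ℝ),
      (∀ t ∈ Icc (0 : ℝ) T, v t ∈ D) →
      ContinuousOn v' (Icc 0 T) →
      (∀ t ∈ Icc (0 : ℝ) T, HasDerivWithinAt v (v' t) (Icc 0 T) t) →
      (∀ t ∈ Icc (0 : ℝ) T, G (v t) + β * v t - α * v t ^ 2 ≤ v' t) →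
      f ≤ v 0 → u T ≤ v T) := by
  subst hu0
  refine ⟨fun v v' hvD _ hv' hv hv0 => ?_, fun v v' hvD _ hv' hv hv0 => ?_⟩
  · exact subsolution_le_supersolution hpos hcon hgen α β hT.le hvD huD hv' hu' hv
      (fun _ _ => le_rfl) hv0
  · exact subsolution_le_supersolution hpos hcon hgen α β hT.le huD hvD hu' hv'
      (fun _ _ => le_rfl) hv hv0

/-- Lemma 25 (Sub- and supersolutions): comparison of classical sub/supersolutions of
`∂u/∂t = G u + β u - α u²` on `[0, T]` with a classical solution `u` with `u 0 = f ∈ D(G)`. -/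
theorem statement2 (l : ℝ) (S : ℝ → C(E, ℝ) →L[ℝ] C(E, ℝ))
    (D : Set C(E, ℝ)) (G : C(E, ℝ) → C(E, ℝ))
    (hsg : IsSemigroupOn S) (hsc : StronglyContinuousSG S) (hpos : PositiveSG S)
    (hcon : ContractiveSG l S) (hgen : IsGeneratorOf S D G)
    (α β : C(E, ℝ)) (hα : 0 ≤ α)
    (T : ℝ) (hT : 0 < T) (f : C(E, ℝ)) (hf : f ∈ D)
    -- `u` is a classical solution on `[0, T]` with `u 0 = f`
    (u : ℝ → C(E, ℝ)) (hu0 : u 0 = f) (huD : ∀ t ∈ Icc (0 : ℝ) T, u t ∈ D)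
    (hu' : ∀ t ∈ Icc (0 : ℝ) T,
      HasDerivWithinAt u (G (u t) + β * u t - α * u t ^ 2) (Icc 0 T) t)
    (hucont : ContinuousOn (fun t => G (u t) + β * u t - α * u t ^ 2) (Icc 0 T)) :
    -- subsolutions stay below `u`
    (∀ v v' : ℝ → C(E, ℝ),
      (∀ t ∈ Icc (0 : ℝ) T, v t ∈ D) →
      ContinuousOn v' (Icc 0 T) →
      (∀ t ∈ Icc (0 : ℝ) T, HasDerivWithinAt v (v' t) (Icc 0 T) t) →
      (∀ t ∈ Icc (0 : ℝ) T, v' t ≤ G (v t) + β * v t - α * v t ^ 2) →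
      v 0 ≤ f → v T ≤ u T) ∧
    -- supersolutions stay above `u`
    (∀ v v' : ℝ → C(E, ℝ),
      (∀ t ∈ Icc (0 : ℝ) T, v t ∈ D) →
      ContinuousOn v' (Icc 0 T) →
      (∀ t ∈ Icc (0 : ℝ) T, HasDerivWithinAt v (v' t) (Icc 0 T) t) →
      (∀ t ∈ Icc (0 : ℝ) T, G (v t) + β * v t - α * v t ^ 2 ≤ v' t) →
      f ≤ v 0 → u T ≤ v T) :=
  statement2_general l S D G hpos hcon hgen α β T hT f u hu0 huD hu'
end

section
/- Let λ ∈ ℝ, let S be a strongly continuous, positive, λ-contractive semigroup on C(E) with generator G, and let h ∈ D(G) satisfy h(x) > 0 for all x ∈ E. Define S̃_t f := (1/h)·S_t(h·f) for f ∈ C(E) and t ≥ 0 (pointwise product and quotient). Then (S̃_t)_{t≥0} is a strongly continuous, positive, λ̃-contractive semigroup on C(E), where λ̃ := ‖(Gh)/h‖, and its generator G̃ is given by G̃f = (1/h)·G(h·f) with domain D(G̃) = {f ∈ C(E) : h·f ∈ D(G)}. -/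
open Filter Topology Set MeasureTheory

variable {E : Type*} [TopologicalSpace E] [CompactSpace E] [TopologicalSpace.MetrizableSpace E] [Nonempty E]

/-!
Writing `A f := h * f`, the transformed family is the similarity transform `A⁻¹ S_t A`, so the
semigroup law, strong continuity and the description of the generator carry over from `S`
formally, and positivity survives because `h > 0`.

Contractivity is a property of any positive semigroup `T` whose generator contains `1` in its
domain: positivity gives `|T_t f| ≤ ‖f‖ T_t 1`, and if `G 1 ≤ μ` then for small `t` the
generator yields `T_t 1 ≤ 1 + (μ + ε) t ≤ e^{(μ + ε) t}`; positivity propagates this bound through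
the semigroup law to all `t`, and `ε → 0` gives `T_t 1 ≤ e^{μ t}`. For `T = A⁻¹ S A` one has
`1 ∈ D(G̃)` with `G̃ 1 = (G h) / h`.
-/

section PositiveSemigroup

variable {X : Type*} [TopologicalSpace X] {S : ℝ → C(X, ℝ) →L[ℝ] C(X, ℝ)} {D : Set C(X, ℝ)}
  {G : C(X, ℝ) → C(X, ℝ)}

theorem PositiveSG.mono (hS : PositiveSG S) {t : ℝ} (ht : 0 ≤ t) {f g : C(X, ℝ)}
    (hfg : f ≤ g) : S t f ≤ S t g := by
  have := hS t ht (g - f) (sub_nonneg.mpr hfg)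
  rwa [map_sub, sub_nonneg] at this

theorem PositiveSG.abs_apply_le [CompactSpace X] (hS : PositiveSG S) {t : ℝ} (ht : 0 ≤ t)
    (f : C(X, ℝ)) (x : X) : |S t f x| ≤ ‖f‖ * S t 1 x := by
  have hle : f ≤ ‖f‖ • 1 := ContinuousMap.le_def.mpr fun y => by
    simpa using le_trans (le_abs_self _) (f.norm_coe_le_norm y)
  have hge : -(‖f‖ • 1) ≤ f := ContinuousMap.le_def.mpr fun y => by
    simpa [neg_le] using le_trans (neg_le_abs _) (f.norm_coe_le_norm y)
  have upper := ContinuousMap.le_def.mp (hS.mono ht hle) x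
  have lower := ContinuousMap.le_def.mp (hS.mono ht hge) x
  simp only [map_neg, map_smul, ContinuousMap.neg_apply, ContinuousMap.smul_apply,
    smul_eq_mul] at upper lower
  exact abs_le.mpr ⟨by linarith, upper⟩

theorem PositiveSG.apply_nat_mul_one_le (hsg : IsSemigroupOn S) (hS : PositiveSG S)
    {s c : ℝ} (hs : 0 ≤ s) (hc : 0 ≤ c) (hsc : ∀ x, S s 1 x ≤ c) (n : ℕ) (x : X) :
    S (n * s) 1 x ≤ c ^ n := by
  induction n generalizing x with
  | zero => simp [hsg.1]
  | succ n ih =>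
    have hsplit : S ((n + 1 : ℕ) * s) = (S s).comp (S (n * s)) := by
      rw [← hsg.2 s _ hs (by positivity)]
      push_cast
      ring_nf
    have hmono := ContinuousMap.le_def.mp
      (hS.mono hs (ContinuousMap.le_def.mpr fun y => by simpa using ih y :
        S (n * s) 1 ≤ c ^ n • 1)) x
    simp only [map_smul, ContinuousMap.smul_apply, smul_eq_mul] at hmono
    rw [hsplit, ContinuousLinearMap.comp_apply, pow_succ]
    exact hmono.trans (mul_le_mul_of_nonneg_left (hsc x) (by positivity))

theorem IsGeneratorOf.eventually_apply_one_le_exp [CompactSpace X] (hgen : IsGeneratorOf S D G)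
    (h1 : 1 ∈ D) {μ ε : ℝ} (hμ : ∀ x, G 1 x ≤ μ) (hε : 0 < ε) :
    ∀ᶠ t in 𝓝[>] 0, ∀ x, S t 1 x ≤ Real.exp ((μ + ε) * t) := by
  filter_upwards [hgen.1 1 h1 (Metric.ball_mem_nhds _ hε), self_mem_nhdsWithin]
    with t hball (ht : 0 < t) x
  have hx : t⁻¹ * (S t 1 x - 1) - G 1 x < ε := by
    have := (ContinuousMap.dist_apply_le_dist x).trans_lt (Metric.mem_ball.mp hball)
    simpa [Real.dist_eq] using (le_abs_self _).trans_lt this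
  have hquot : (S t 1 x - 1) / t < μ + ε := by
    rw [div_eq_inv_mul]; linarith [hμ x]
  rw [div_lt_iff₀ ht] at hquot
  linarith [Real.add_one_le_exp ((μ + ε) * t)]

theorem PositiveSG.apply_one_le_exp [CompactSpace X] (hsg : IsSemigroupOn S) (hS : PositiveSG S)
    (hgen : IsGeneratorOf S D G) (h1 : 1 ∈ D) {μ : ℝ} (hμ : ∀ x, G 1 x ≤ μ) {t : ℝ}
    (ht : 0 ≤ t) (x : X) : S t 1 x ≤ Real.exp (μ * t) := by
  rcases ht.eq_or_lt with rfl | ht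
  · simp [hsg.1]
  have hε : ∀ ε > 0, S t 1 x ≤ Real.exp ((μ + ε) * t) := by
    intro ε hε
    have hsteps : Tendsto (fun n : ℕ => t / n) atTop (𝓝[>] 0) :=
      tendsto_nhdsWithin_iff.mpr ⟨tendsto_const_div_atTop_nhds_zero_nat t,
        eventually_atTop.mpr ⟨1, fun n hn => div_pos ht (by exact_mod_cast hn)⟩⟩
    obtain ⟨n, hsmall, hn⟩ := ((hsteps.eventually
      (hgen.eventually_apply_one_le_exp h1 hμ hε)).and (eventually_ge_atTop 1)).exists
    have hn0 : (n : ℝ) ≠ 0 := by positivity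
    calc S t 1 x = S (n * (t / n)) 1 x := by rw [mul_div_cancel₀ _ hn0]
      _ ≤ Real.exp ((μ + ε) * (t / n)) ^ n :=
        hS.apply_nat_mul_one_le hsg (by positivity) (Real.exp_pos _).le hsmall n x
      _ = Real.exp ((μ + ε) * t) := by rw [← Real.exp_nat_mul]; field_simp
  have hlim : Tendsto (fun ε => Real.exp ((μ + ε) * t)) (𝓝[>] 0) (𝓝 (Real.exp (μ * t))) :=
    tendsto_nhdsWithin_of_tendsto_nhds ((by fun_prop : Continuous
      fun ε => Real.exp ((μ + ε) * t)).tendsto' 0 _ (by simp))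
  exact ge_of_tendsto hlim (eventually_nhdsWithin_of_forall hε)

theorem PositiveSG.contractiveSG_norm_generator_one [CompactSpace X] (hsg : IsSemigroupOn S)
    (hS : PositiveSG S) (hgen : IsGeneratorOf S D G) (h1 : 1 ∈ D) : ContractiveSG ‖G 1‖ S := by
  intro t ht f
  refine (ContinuousMap.norm_le _ (by positivity)).mpr fun x => ?_
  have hμ : ∀ x, G 1 x ≤ ‖G 1‖ := fun x => (le_abs_self _).trans ((G 1).norm_coe_le_norm x)
  calc ‖S t f x‖ ≤ ‖f‖ * S t 1 x := hS.abs_apply_le ht f x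
    _ ≤ ‖f‖ * Real.exp (‖G 1‖ * t) := by
        gcongr; exact hS.apply_one_le_exp hsg hgen h1 hμ ht x
    _ = Real.exp (‖G 1‖ * t) * ‖f‖ := mul_comm _ _

end PositiveSemigroup

section Conjugation

variable {X : Type*} [TopologicalSpace X] {S : ℝ → C(X, ℝ) →L[ℝ] C(X, ℝ)}

def conjSG (A : C(X, ℝ) ≃L[ℝ] C(X, ℝ)) (S : ℝ → C(X, ℝ) →L[ℝ] C(X, ℝ)) (t : ℝ) :
    C(X, ℝ) →L[ℝ] C(X, ℝ) :=
  (A.symm : C(X, ℝ) →L[ℝ] C(X, ℝ)).comp ((S t).comp (A : C(X, ℝ) →L[ℝ] C(X, ℝ)))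

variable (A : C(X, ℝ) ≃L[ℝ] C(X, ℝ))

@[simp]
theorem conjSG_apply (t : ℝ) (f : C(X, ℝ)) : conjSG A S t f = A.symm (S t (A f)) := rfl

theorem IsSemigroupOn.conjSG (hS : IsSemigroupOn S) : IsSemigroupOn (conjSG A S) := by
  refine ⟨?_, fun s t hs ht => ?_⟩ <;> ext1 f
  · simp [hS.1]
  · simp [hS.2 s t hs ht]

theorem StronglyContinuousSG.conjSG (hS : StronglyContinuousSG S) :
    StronglyContinuousSG (conjSG A S) := fun f => by
  simpa [Function.comp_def] using (A.symm.continuous.tendsto _).comp (hS (A f))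

theorem smul_conjSG_sub (t : ℝ) (f : C(X, ℝ)) :
    t⁻¹ • (conjSG A S t f - f) = A.symm (t⁻¹ • (S t (A f) - A f)) := by
  simp

theorem IsGeneratorOf.conjSG {D : Set C(X, ℝ)} {G : C(X, ℝ) → C(X, ℝ)}
    (hgen : IsGeneratorOf S D G) :
    IsGeneratorOf (conjSG A S) (A ⁻¹' D) (fun f => A.symm (G (A f))) := by
  refine ⟨fun f hf => ?_, fun f ⟨g, hg⟩ => hgen.2 (A f) ⟨A g, ?_⟩⟩
  · simp_rw [smul_conjSG_sub]
    exact (A.symm.continuous.tendsto _).comp (hgen.1 (A f) hf)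
  · have := (A.continuous.tendsto _).comp hg
    simp_rw [Function.comp_def, smul_conjSG_sub, ContinuousLinearEquiv.apply_symm_apply] at this
    exact this

end Conjugation

section Multiplication

variable {X : Type*} [TopologicalSpace X] [CompactSpace X]

noncomputable def mulEquivOfNeZero (h : C(X, ℝ)) (hh : ∀ x, h x ≠ 0) : C(X, ℝ) ≃L[ℝ] C(X, ℝ) :=
  .equivOfInverse (.mul ℝ C(X, ℝ) h) (.mul ℝ C(X, ℝ) ⟨fun x => (h x)⁻¹, h.continuous.inv₀ hh⟩)
    (fun f => by ext x; simp [hh x]) (fun f => by ext x; simp [hh x])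

variable {h : C(X, ℝ)} {hh : ∀ x, h x ≠ 0}

@[simp]
theorem mulEquivOfNeZero_apply (f : C(X, ℝ)) : mulEquivOfNeZero h hh f = h * f := rfl

@[simp]
theorem mulEquivOfNeZero_symm_apply_apply (f : C(X, ℝ)) (x : X) :
    (mulEquivOfNeZero h hh).symm f x = f x / h x :=
  inv_mul_eq_div _ _

theorem PositiveSG.conjSG_mulEquivOfNeZero {S : ℝ → C(X, ℝ) →L[ℝ] C(X, ℝ)} (hS : PositiveSG S)
    (hpos : ∀ x, 0 < h x) : PositiveSG (conjSG (mulEquivOfNeZero h fun x => (hpos x).ne') S) := by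
  intro t ht f hf
  have hhf : 0 ≤ h * f := mul_nonneg (ContinuousMap.le_def.mpr fun x => (hpos x).le) hf
  refine ContinuousMap.le_def.mpr fun x => ?_
  simpa using div_nonneg (ContinuousMap.le_def.mp (hS t ht _ hhf) x) (hpos x).le

end Multiplication

theorem statement5_general (S : ℝ → C(E, ℝ) →L[ℝ] C(E, ℝ))
    (D : Set C(E, ℝ)) (G : C(E, ℝ) → C(E, ℝ))
    (hsg : IsSemigroupOn S) (hsc : StronglyContinuousSG S) (hpos : PositiveSG S)
    (hgen : IsGeneratorOf S D G)
    (h : C(E, ℝ)) (hD : h ∈ D) (hpos' : ∀ x : E, 0 < h x) :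
    ∃ (S' : ℝ → C(E, ℝ) →L[ℝ] C(E, ℝ)) (G' : C(E, ℝ) → C(E, ℝ)),
      -- `S'` is the weighted semigroup `S̃ t f = (1/h) ⬝ S t (h ⬝ f)`
      (∀ t : ℝ, 0 ≤ t → ∀ f : C(E, ℝ), ∀ x : E, S' t f x = S t (h * f) x / h x) ∧
      IsSemigroupOn S' ∧ StronglyContinuousSG S' ∧ PositiveSG S' ∧
      -- `S'` is `λ̃`-contractive with `λ̃ = ‖(Gh)/h‖`
      ContractiveSG (‖ContinuousMap.mk (fun x : E => G h x / h x)
        ((G h).continuous.div h.continuous fun x => (hpos' x).ne')‖) S' ∧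
      -- its generator is `G̃ f = (1/h) ⬝ G (h ⬝ f)` with domain `{f : h ⬝ f ∈ D}`
      IsGeneratorOf S' {f : C(E, ℝ) | h * f ∈ D} G' ∧
      ∀ f : C(E, ℝ), h * f ∈ D → ∀ x : E, G' f x = G (h * f) x / h x := by
  set A := mulEquivOfNeZero h fun x => (hpos' x).ne'
  have hgen' : IsGeneratorOf (conjSG A S) {f | h * f ∈ D} fun f => A.symm (G (A f)) :=
    hgen.conjSG A
  have h_one_mem : (1 : C(E, ℝ)) ∈ {f | h * f ∈ D} := by simpa using hD
  have hG'_one : A.symm (G (A 1)) = ⟨fun x => G h x / h x,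
      (G h).continuous.div h.continuous fun x => (hpos' x).ne'⟩ := by
    ext x; simp [A]
  refine ⟨conjSG A S, fun f => A.symm (G (A f)), fun t _ f x => by simp [A],
    hsg.conjSG A, hsc.conjSG A, hpos.conjSG_mulEquivOfNeZero hpos', ?_, hgen',
    fun f _ x => by simp [A]⟩
  have hcon := (hpos.conjSG_mulEquivOfNeZero hpos').contractiveSG_norm_generator_one
    (hsg.conjSG A) hgen' h_one_mem
  rwa [hG'_one] at hcon

/-- Lemma 28 (h-transformed semigroup): if `h ∈ D(G)` with `h > 0`, then
`S̃ t f := (1/h) ⬝ S t (h ⬝ f)` defines a strongly continuous, positive,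
`‖(Gh)/h‖`-contractive semigroup on `C(E)` with generator
`G̃ f = (1/h) ⬝ G (h ⬝ f)` on domain `{f : h ⬝ f ∈ D(G)}`. -/
theorem statement5 (l : ℝ) (S : ℝ → C(E, ℝ) →L[ℝ] C(E, ℝ))
    (D : Set C(E, ℝ)) (G : C(E, ℝ) → C(E, ℝ))
    (hsg : IsSemigroupOn S) (hsc : StronglyContinuousSG S) (hpos : PositiveSG S)
    (hcon : ContractiveSG l S) (hgen : IsGeneratorOf S D G)
    (h : C(E, ℝ)) (hD : h ∈ D) (hpos' : ∀ x : E, 0 < h x) :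
    ∃ (S' : ℝ → C(E, ℝ) →L[ℝ] C(E, ℝ)) (G' : C(E, ℝ) → C(E, ℝ)),
      -- `S'` is the weighted semigroup `S̃ t f = (1/h) ⬝ S t (h ⬝ f)`
      (∀ t : ℝ, 0 ≤ t → ∀ f : C(E, ℝ), ∀ x : E, S' t f x = S t (h * f) x / h x) ∧
      IsSemigroupOn S' ∧ StronglyContinuousSG S' ∧ PositiveSG S' ∧
      -- `S'` is `λ̃`-contractive with `λ̃ = ‖(Gh)/h‖`
      ContractiveSG (‖ContinuousMap.mk (fun x : E => G h x / h x)
        ((G h).continuous.div h.continuous fun x => (hpos' x).ne')‖) S' ∧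
      -- its generator is `G̃ f = (1/h) ⬝ G (h ⬝ f)` with domain `{f : h ⬝ f ∈ D}`
      IsGeneratorOf S' {f : C(E, ℝ) | h * f ∈ D} G' ∧
      ∀ f : C(E, ℝ), h * f ∈ D → ∀ x : E, G' f x = G (h * f) x / h x :=
  statement5_general S D G hsg hsc hpos hgen h hD hpos'
end

section
/- Let G be the generator of a Feller semigroup on C(E) and let h ∈ D(G) satisfy h(x) > 0 for all x ∈ E. Then the operator G^h f := (1/h)·(G(h·f) − (Gh)·f), with domain D(G^h) := {f ∈ C(E) : h·f ∈ D(G)}, is the generator of a Feller semigroup on C(E), i.e., of a strongly continuous, positive semigroup (P^h_t)_{t≥0} with P^h_t 1 = 1 for all t ≥ 0. -/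
open Filter Topology Set MeasureTheory

variable {E : Type*} [TopologicalSpace E] [CompactSpace E] [TopologicalSpace.MetrizableSpace E] [Nonempty E]

/-!
The `h`-transform is a compensated conjugate of a bounded positive perturbation of `G`.
Put `c = ‖Gh/h‖` and `W = c - Gh/h`, so that `W ≥ 0` and `(G + W) h = c h`. Extend the Feller
semigroup `P` to negative times by the identity; it is then a contraction semigroup with
continuous orbits. The Dyson–Phillips series `Q_t = ∑ₙ Qₙ(t)` with `Q₀(t) = P_t` and
`Qₙ₊₁(t) = ∫₀ᵗ P_{t-s} W Qₙ(s) ds` converges like `e^{‖W‖t}`. Its terms are positive, and it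
solves the Volterra equation `u(t) = P_t f + ∫₀ᵗ P_{t-s} W u(s) ds`. This equation has only
one continuous solution, by a Gronwall iteration. Uniqueness makes `Q` linear and a semigroup,
and gives `Q_t h = e^{ct} h`, since `t ↦ e^{ct} h` also solves the equation. The generator of
`Q` is `G + W`. Finally, `Pʰ_t f = e^{-ct} h⁻¹ Q_t (h f)` is positive and conservative, and
its generator is `h⁻¹ (G + W)(h f) - c f = h⁻¹ (G(h f) - (Gh) f)`.
-/

section ContractionSemigroup

variable {X : Type*} [NormedAddCommGroup X] [NormedSpace ℝ X]

/-- Negative times act as the identity, so that orbits are continuous on all of `ℝ`. -/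
structure IsContractionSemigroup (P : ℝ → X →L[ℝ] X) : Prop where
  apply_of_nonpos : ∀ t ≤ 0, ∀ f, P t f = f
  add_apply : ∀ s t, 0 ≤ s → 0 ≤ t → ∀ f, P (s + t) f = P s (P t f)
  norm_apply_le : ∀ t f, ‖P t f‖ ≤ ‖f‖
  continuous_apply : ∀ f, Continuous fun t => P t f

variable {P : ℝ → X →L[ℝ] X}

namespace IsContractionSemigroup

theorem of_tendsto_nhdsGT (h0 : ∀ t ≤ 0, ∀ f, P t f = f)
    (hadd : ∀ s t, 0 ≤ s → 0 ≤ t → ∀ f, P (s + t) f = P s (P t f))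
    (hnorm : ∀ t f, ‖P t f‖ ≤ ‖f‖) (hright : ∀ f, Tendsto (fun t => P t f) (𝓝[>] 0) (𝓝 f)) :
    IsContractionSemigroup P := by
  refine ⟨h0, hadd, hnorm, fun f => continuous_iff_continuousAt.2 fun t₀ => ?_⟩
  have hclamp : ∀ t, P t f = P (max t 0) f := fun t => by
    rcases le_total t 0 with ht | ht
    · rw [h0 t ht, max_eq_right ht, h0 0 le_rfl]
    · rw [max_eq_left ht]
  have hdist : ∀ a b, 0 ≤ a → a ≤ b → ‖P b f - P a f‖ ≤ ‖P (b - a) f - f‖ := fun a b ha hab => by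
    rw [← add_sub_cancel a b, hadd a (b - a) ha (sub_nonneg.2 hab), ← map_sub, add_sub_cancel]
    exact hnorm _ _
  have hdist' : ∀ a b, 0 ≤ a → 0 ≤ b → ‖P b f - P a f‖ ≤ ‖P |b - a| f - f‖ := fun a b ha hb => by
    rcases le_total a b with hab | hba
    · rw [abs_of_nonneg (sub_nonneg.2 hab)]
      exact hdist a b ha hab
    · rw [abs_of_nonpos (sub_nonpos.2 hba), neg_sub, norm_sub_rev]
      exact hdist b a hb hba
  have hsmall : Tendsto (fun r => P r f - f) (𝓝 0) (𝓝 0) := by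
    rw [← nhdsLE_sup_nhdsGT, tendsto_sup]
    refine ⟨tendsto_const_nhds.congr' ?_, by simpa using (hright f).sub_const f⟩
    exact eventually_nhdsWithin_of_forall fun r hr => (sub_eq_zero.2 (h0 r hr f)).symm
  have hgap : Tendsto (fun t => |max t 0 - max t₀ 0|) (𝓝 t₀) (𝓝 0) := by
    have hc : Continuous fun t : ℝ => |max t 0 - max t₀ 0| := by fun_prop
    simpa using hc.tendsto t₀
  have hbound : Tendsto (fun t => ‖P |max t 0 - max t₀ 0| f - f‖) (𝓝 t₀) (𝓝 0) := by
    simpa using (hsmall.comp hgap).norm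
  rw [ContinuousAt, tendsto_iff_norm_sub_tendsto_zero]
  refine squeeze_zero (fun _ => norm_nonneg _) (fun t => ?_) hbound
  rw [hclamp t, hclamp t₀]
  exact hdist' _ _ (le_max_right t₀ 0) (le_max_right t 0)

theorem continuous_uncurry (hP : IsContractionSemigroup P) :
    Continuous fun p : ℝ × X => P p.1 p.2 := by
  refine continuous_iff_continuousAt.2 fun ⟨t₀, f₀⟩ => ?_
  have hsplit : (fun p : ℝ × X => P p.1 p.2) = fun p => P p.1 (p.2 - f₀) + P p.1 f₀ := by
    funext p
    rw [← map_add, sub_add_cancel]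
  have hsmall : Tendsto (fun p : ℝ × X => P p.1 (p.2 - f₀)) (𝓝 (t₀, f₀)) (𝓝 0) := by
    refine squeeze_zero_norm (fun p => hP.norm_apply_le p.1 _) ?_
    simpa using ((continuous_snd.sub continuous_const).tendsto' (t₀, f₀) 0 (sub_self f₀)).norm
  have horbit := ((hP.continuous_apply f₀).comp continuous_fst).tendsto (t₀, f₀)
  simpa [ContinuousAt, hsplit] using hsmall.add horbit

theorem hasDerivWithinAt_apply (hP : IsContractionSemigroup P) {f g : X}
    (hg : Tendsto (fun ε : ℝ => ε⁻¹ • (P ε f - f)) (𝓝[>] 0) (𝓝 g)) {t : ℝ} (ht : 0 ≤ t) :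
    HasDerivWithinAt (fun r => P r f) (P t g) (Ioi t) t := by
  rw [hasDerivWithinAt_iff_tendsto_slope, sdiff_singleton_eq_self self_notMem_Ioi]
  have hshift : Tendsto (fun r => r - t) (𝓝[>] t) (𝓝[>] 0) := by
    refine tendsto_nhdsWithin_iff.2
      ⟨?_, eventually_nhdsWithin_of_forall fun r (hr : t < r) => sub_pos.2 hr⟩
    exact ((continuous_sub_right t).tendsto' t 0 (sub_self t)).mono_left nhdsWithin_le_nhds
  refine (((P t).continuous.tendsto g).comp (hg.comp hshift)).congr' ?_
  filter_upwards [self_mem_nhdsWithin] with r (hr : t < r)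
  have hsplit : P r f = P t (P (r - t) f) := by
    rw [← hP.add_apply t (r - t) ht (sub_pos.2 hr).le, add_sub_cancel]
  simp [slope_def_module, hsplit, map_sub, map_smul]

end IsContractionSemigroup

end ContractionSemigroup

section Perturbation

variable {X : Type*} [NormedAddCommGroup X] [NormedSpace ℝ X]

noncomputable def duhamel (P : ℝ → X →L[ℝ] X) (B : X →L[ℝ] X) (u : ℝ → X) (t : ℝ) : X :=
  ∫ s in (0 : ℝ)..t, P (t - s) (B (u s))

noncomputable def dysonPhillipsTerm (P : ℝ → X →L[ℝ] X) (B : X →L[ℝ] X) (f : X) :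
    ℕ → ℝ → X
  | 0 => fun t => P t f
  | n + 1 => duhamel P B (dysonPhillipsTerm P B f n)

noncomputable def dysonPhillipsSum (P : ℝ → X →L[ℝ] X) (B : X →L[ℝ] X) (t : ℝ) (f : X) : X :=
  ∑' n, dysonPhillipsTerm P B f n (max t 0)

variable {P : ℝ → X →L[ℝ] X} {B : X →L[ℝ] X}

theorem duhamel_smul (c : ℝ) (u : ℝ → X) (t : ℝ) :
    duhamel P B (fun s => c • u s) t = c • duhamel P B u t := by
  simp only [duhamel, map_smul, intervalIntegral.integral_smul]

theorem dysonPhillipsSum_nonneg [PartialOrder X] [IsOrderedAddMonoid X] [IsOrderedModule ℝ X]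
    [OrderClosedTopology X] (hPpos : ∀ t, 0 ≤ t → ∀ f, 0 ≤ f → 0 ≤ P t f)
    (hBpos : ∀ f, 0 ≤ f → 0 ≤ B f) {f : X} (hf : 0 ≤ f) (t : ℝ) :
    0 ≤ dysonPhillipsSum P B t f := by
  have hterm : ∀ n {s : ℝ}, 0 ≤ s → 0 ≤ dysonPhillipsTerm P B f n s := by
    intro n
    induction n with
    | zero => exact fun hs => hPpos _ hs f hf
    | succ n ih =>
      intro s hs
      rw [dysonPhillipsTerm, duhamel, intervalIntegral.integral_of_le hs]
      exact integral_nonneg_of_ae <| (ae_restrict_mem measurableSet_Ioc).mono fun σ hσ =>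
        hPpos _ (sub_nonneg.2 hσ.2) _ (hBpos _ (ih hσ.1.le))
  exact tsum_nonneg fun n => hterm n (le_max_right t 0)

namespace IsContractionSemigroup

theorem continuous_duhamelIntegrand (hP : IsContractionSemigroup P) {u : ℝ → X}
    (hu : Continuous u) : Continuous fun p : ℝ × ℝ => P (p.1 - p.2) (B (u p.2)) :=
  hP.continuous_uncurry.comp
    ((continuous_fst.sub continuous_snd).prodMk (B.continuous.comp (hu.comp continuous_snd)))

theorem intervalIntegrable_duhamelIntegrand (hP : IsContractionSemigroup P) {u : ℝ → X}
    (hu : Continuous u) (t a b : ℝ) :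
    IntervalIntegrable (fun s => P (t - s) (B (u s))) volume a b :=
  ((hP.continuous_duhamelIntegrand hu).comp (Continuous.prodMk_right t)).intervalIntegrable a b

theorem continuous_duhamel (hP : IsContractionSemigroup P) {u : ℝ → X} (hu : Continuous u) :
    Continuous (duhamel P B u) :=
  intervalIntegral.continuous_parametric_intervalIntegral_of_continuous
    (hP.continuous_duhamelIntegrand hu) continuous_id

theorem duhamel_add (hP : IsContractionSemigroup P) {u v : ℝ → X} (hu : Continuous u)
    (hv : Continuous v) (t : ℝ) :
    duhamel P B (fun s => u s + v s) t = duhamel P B u t + duhamel P B v t := by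
  simp only [duhamel, map_add]
  exact intervalIntegral.integral_add (hP.intervalIntegrable_duhamelIntegrand hu t 0 t)
    (hP.intervalIntegrable_duhamelIntegrand hv t 0 t)

theorem duhamel_sub (hP : IsContractionSemigroup P) {u v : ℝ → X} (hu : Continuous u)
    (hv : Continuous v) (t : ℝ) :
    duhamel P B (fun s => u s - v s) t = duhamel P B u t - duhamel P B v t := by
  simp only [duhamel, map_sub]
  exact intervalIntegral.integral_sub (hP.intervalIntegrable_duhamelIntegrand hu t 0 t)
    (hP.intervalIntegrable_duhamelIntegrand hv t 0 t)

theorem norm_duhamel_le (hP : IsContractionSemigroup P) {u : ℝ → X} {K t : ℝ} (ht : 0 ≤ t)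
    (n : ℕ) (hu : ∀ s ∈ Icc 0 t, ‖u s‖ ≤ K * ((‖B‖ * s) ^ n / n.factorial)) :
    ‖duhamel P B u t‖ ≤ K * ((‖B‖ * t) ^ (n + 1) / (n + 1).factorial) := by
  have hbound : ∀ s ∈ Ioc 0 t,
      ‖P (t - s) (B (u s))‖ ≤ ‖B‖ * (K * ((‖B‖ * s) ^ n / n.factorial)) := fun s hs => calc
    ‖P (t - s) (B (u s))‖ ≤ ‖B‖ * ‖u s‖ := (hP.norm_apply_le _ _).trans (B.le_opNorm _)
    _ ≤ _ := by gcongr; exact hu s (Ioc_subset_Icc_self hs)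
  calc ‖duhamel P B u t‖
      ≤ ∫ s in (0 : ℝ)..t, ‖B‖ * (K * ((‖B‖ * s) ^ n / n.factorial)) :=
        intervalIntegral.norm_integral_le_of_norm_le ht (ae_of_all _ hbound)
          (Continuous.intervalIntegrable (by fun_prop) _ _)
    _ = K * ((‖B‖ * t) ^ (n + 1) / (n + 1).factorial) := by
        simp only [mul_pow, mul_div_assoc, intervalIntegral.integral_const_mul,
          intervalIntegral.integral_div, integral_pow, Nat.factorial_succ]
        push_cast
        field_simp
        ring

theorem eq_zero_of_eq_duhamel (hP : IsContractionSemigroup P) {u : ℝ → X} (hu : Continuous u)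
    (hfix : ∀ t, 0 ≤ t → u t = duhamel P B u t) {T : ℝ} (hT : 0 ≤ T) : u T = 0 := by
  obtain ⟨C, hC⟩ :=
    (isCompact_Icc (a := 0) (b := T)).exists_bound_of_continuousOn hu.continuousOn
  have hbound : ∀ n : ℕ, ∀ t ∈ Icc 0 T, ‖u t‖ ≤ C * ((‖B‖ * t) ^ n / n.factorial) := by
    intro n
    induction n with
    | zero => simpa using hC
    | succ n ih =>
      intro t ht
      rw [hfix t ht.1]
      exact hP.norm_duhamel_le ht.1 n fun s hs => ih s ⟨hs.1, hs.2.trans ht.2⟩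
  have hlim : Tendsto (fun n : ℕ => C * ((‖B‖ * T) ^ n / n.factorial)) atTop (𝓝 0) := by
    simpa using (Real.summable_pow_div_factorial (‖B‖ * T)).tendsto_atTop_zero.const_mul C
  exact norm_le_zero_iff.1 <|
    ge_of_tendsto hlim (Eventually.of_forall fun n => hbound n T ⟨hT, le_rfl⟩)

theorem continuous_dysonPhillipsTerm (hP : IsContractionSemigroup P) (f : X) (n : ℕ) :
    Continuous (dysonPhillipsTerm P B f n) := by
  induction n with
  | zero => exact hP.continuous_apply f
  | succ n ih => exact hP.continuous_duhamel ih

theorem norm_dysonPhillipsTerm_le (hP : IsContractionSemigroup P) (f : X) (n : ℕ) {t : ℝ}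
    (ht : 0 ≤ t) : ‖dysonPhillipsTerm P B f n t‖ ≤ ‖f‖ * ((‖B‖ * t) ^ n / n.factorial) := by
  induction n generalizing t with
  | zero => simpa [dysonPhillipsTerm] using hP.norm_apply_le t f
  | succ n ih => exact hP.norm_duhamel_le ht n fun s hs => ih hs.1

theorem dysonPhillipsSum_of_nonpos (hP : IsContractionSemigroup P) (f : X) {t : ℝ}
    (ht : t ≤ 0) : dysonPhillipsSum P B t f = f := by
  rw [dysonPhillipsSum, max_eq_right ht, tsum_eq_single 0]
  · exact hP.apply_of_nonpos 0 le_rfl f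
  · rintro (_ | n) hn
    · exact absurd rfl hn
    · simp [dysonPhillipsTerm, duhamel]

theorem norm_dysonPhillipsSum_le (hP : IsContractionSemigroup P) (t : ℝ) (f : X) :
    ‖dysonPhillipsSum P B t f‖ ≤ Real.exp (‖B‖ * max t 0) * ‖f‖ := by
  rw [dysonPhillipsSum, Real.exp_eq_exp_ℝ, mul_comm]
  exact tsum_of_norm_bounded ((NormedSpace.expSeries_div_hasSum_exp _).mul_left ‖f‖)
    fun n => hP.norm_dysonPhillipsTerm_le f n (le_max_right t 0)

variable [CompleteSpace X]

theorem duhamel_add_time (hP : IsContractionSemigroup P) {u : ℝ → X} (hu : Continuous u)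
    {t r : ℝ} (ht : 0 ≤ t) (hr : 0 ≤ r) :
    duhamel P B u (t + r) = P r (duhamel P B u t) + duhamel P B (fun σ => u (t + σ)) r := by
  have hint := hP.intervalIntegrable_duhamelIntegrand (B := B) hu (t + r)
  have hhead : ∫ s in (0 : ℝ)..t, P (t + r - s) (B (u s)) = P r (duhamel P B u t) := by
    rw [duhamel, ← (P r).intervalIntegral_comp_comm
      (hP.intervalIntegrable_duhamelIntegrand hu t 0 t)]
    refine intervalIntegral.integral_congr fun s hs => ?_
    rw [uIcc_of_le ht] at hs
    simp only [← hP.add_apply r (t - s) hr (sub_nonneg.2 hs.2)]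
    congr 2
    ring
  have htail : ∫ s in t..t + r, P (t + r - s) (B (u s)) = duhamel P B (fun σ => u (t + σ)) r := by
    simpa [duhamel] using (intervalIntegral.integral_comp_add_left
      (fun s => P (t + r - s) (B (u s))) t (a := 0) (b := r)).symm
  rw [duhamel, ← intervalIntegral.integral_add_adjacent_intervals (hint 0 t) (hint t (t + r)),
    hhead, htail]

theorem tendsto_inv_smul_duhamel (hP : IsContractionSemigroup P) {u : ℝ → X}
    (hu : Continuous u) :
    Tendsto (fun t => t⁻¹ • duhamel P B u t) (𝓝[≠] 0) (𝓝 (B (u 0))) := by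
  have hrescaled : Continuous fun t => ∫ σ in (0 : ℝ)..1, P (t - t * σ) (B (u (t * σ))) :=
    intervalIntegral.continuous_parametric_intervalIntegral_of_continuous
      (f := fun t σ => P (t - t * σ) (B (u (t * σ))))
      ((hP.continuous_duhamelIntegrand hu).comp
        (continuous_fst.prodMk (continuous_fst.mul continuous_snd))) continuous_const
  have hvalue : ∫ σ in (0 : ℝ)..1, P (0 - 0 * σ) (B (u (0 * σ))) = B (u 0) := by
    simp [hP.apply_of_nonpos 0 le_rfl]
  rw [← hvalue]
  refine ((hrescaled.tendsto 0).mono_left nhdsWithin_le_nhds).congr' ?_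
  filter_upwards [self_mem_nhdsWithin] with t (ht : t ≠ 0)
  simp [duhamel, intervalIntegral.integral_comp_mul_left
    (fun s => P (t - s) (B (u s))) ht]

theorem hasSum_dysonPhillipsTerm (hP : IsContractionSemigroup P) (f : X) {t : ℝ} (ht : 0 ≤ t) :
    HasSum (fun n => dysonPhillipsTerm P B f n t) (dysonPhillipsSum P B t f) := by
  rw [dysonPhillipsSum, max_eq_left ht]
  exact (Summable.of_norm_bounded ((Real.summable_pow_div_factorial _).mul_left ‖f‖)
    fun n => hP.norm_dysonPhillipsTerm_le f n ht).hasSum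

theorem continuous_dysonPhillipsSum (hP : IsContractionSemigroup P) (f : X) :
    Continuous fun t => dysonPhillipsSum P B t f := by
  refine continuous_iff_continuousAt.2 fun t₀ => ContinuousOn.continuousAt ?_
    (Iio_mem_nhds (lt_add_one t₀))
  refine continuousOn_tsum (fun n => ((hP.continuous_dysonPhillipsTerm f n).comp
    (continuous_id.max continuous_const)).continuousOn)
    ((Real.summable_pow_div_factorial (‖B‖ * max (t₀ + 1) 0)).mul_left ‖f‖) fun n t ht => ?_
  refine (hP.norm_dysonPhillipsTerm_le f n (le_max_right t 0)).trans ?_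
  gcongr
  exact (mem_Iio.1 ht).le

theorem dysonPhillipsSum_eq_add_duhamel (hP : IsContractionSemigroup P) (f : X) {t : ℝ}
    (ht : 0 ≤ t) :
    dysonPhillipsSum P B t f = P t f + duhamel P B (fun s => dysonPhillipsSum P B s f) t := by
  have hbound : ∀ n, ∀ s ∈ Ioc 0 t, ‖P (t - s) (B (dysonPhillipsTerm P B f n s))‖
      ≤ ‖B‖ * (‖f‖ * ((‖B‖ * t) ^ n / n.factorial)) := fun n s hs => calc
    ‖P (t - s) (B (dysonPhillipsTerm P B f n s))‖
        ≤ ‖B‖ * ‖dysonPhillipsTerm P B f n s‖ := (hP.norm_apply_le _ _).trans (B.le_opNorm _)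
    _ ≤ ‖B‖ * (‖f‖ * ((‖B‖ * s) ^ n / n.factorial)) := by
        gcongr
        exact hP.norm_dysonPhillipsTerm_le f n hs.1.le
    _ ≤ ‖B‖ * (‖f‖ * ((‖B‖ * t) ^ n / n.factorial)) := by
        gcongr
        exacts [mul_nonneg (norm_nonneg B) hs.1.le, hs.2]
  have hlim : ∀ s ∈ Ioc 0 t, HasSum (fun n => P (t - s) (B (dysonPhillipsTerm P B f n s)))
      (P (t - s) (B (dysonPhillipsSum P B s f))) := fun s hs =>
    (hP.hasSum_dysonPhillipsTerm f hs.1.le).mapL ((P (t - s)).comp B)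
  have htail : HasSum (fun n => dysonPhillipsTerm P B f (n + 1) t)
      (duhamel P B (fun s => dysonPhillipsSum P B s f) t) :=
    intervalIntegral.hasSum_integral_of_dominated_convergence
      (fun n _ => ‖B‖ * (‖f‖ * ((‖B‖ * t) ^ n / n.factorial)))
      (fun n => ((hP.continuous_duhamelIntegrand (hP.continuous_dysonPhillipsTerm f n)).comp
        (Continuous.prodMk_right t)).aestronglyMeasurable)
      (fun n => ae_of_all _ fun s hs => hbound n s (by rwa [uIoc_of_le ht] at hs))
      (ae_of_all _ fun _ _ => ((Real.summable_pow_div_factorial _).mul_left _).mul_left _)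
      intervalIntegrable_const
      (ae_of_all _ fun s hs => hlim s (by rwa [uIoc_of_le ht] at hs))
  have hsum : HasSum (fun n => dysonPhillipsTerm P B f n t)
      (duhamel P B (fun s => dysonPhillipsSum P B s f) t + P t f) := by
    simpa [dysonPhillipsTerm] using
      (hasSum_nat_add_iff (f := fun n => dysonPhillipsTerm P B f n t) 1).1 htail
  rw [(hP.hasSum_dysonPhillipsTerm f ht).unique hsum, add_comm]

theorem eq_dysonPhillipsSum_of_eq_add_duhamel (hP : IsContractionSemigroup P) {f : X}
    {u : ℝ → X} (hu : Continuous u) (hfix : ∀ t, 0 ≤ t → u t = P t f + duhamel P B u t)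
    {t : ℝ} (ht : 0 ≤ t) : u t = dysonPhillipsSum P B t f := by
  have hQ := hP.continuous_dysonPhillipsSum (B := B) f
  refine sub_eq_zero.1 <| hP.eq_zero_of_eq_duhamel (B := B)
    (u := fun s => u s - dysonPhillipsSum P B s f) (hu.sub hQ) (fun r hr => ?_) ht
  rw [hP.duhamel_sub hu hQ, hfix r hr, hP.dysonPhillipsSum_eq_add_duhamel f hr]
  abel

theorem dysonPhillipsSum_add (hP : IsContractionSemigroup P) (t : ℝ) (f g : X) :
    dysonPhillipsSum P B t (f + g) = dysonPhillipsSum P B t f + dysonPhillipsSum P B t g := by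
  rcases le_total t 0 with ht | ht
  · simp only [hP.dysonPhillipsSum_of_nonpos _ ht]
  have hf := hP.continuous_dysonPhillipsSum (B := B) f
  have hg := hP.continuous_dysonPhillipsSum (B := B) g
  refine (hP.eq_dysonPhillipsSum_of_eq_add_duhamel
    (u := fun s => dysonPhillipsSum P B s f + dysonPhillipsSum P B s g) (hf.add hg)
    (fun r hr => ?_) ht).symm
  rw [hP.duhamel_add hf hg, hP.dysonPhillipsSum_eq_add_duhamel f hr,
    hP.dysonPhillipsSum_eq_add_duhamel g hr, map_add]
  abel

theorem dysonPhillipsSum_smul (hP : IsContractionSemigroup P) (t c : ℝ) (f : X) :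
    dysonPhillipsSum P B t (c • f) = c • dysonPhillipsSum P B t f := by
  rcases le_total t 0 with ht | ht
  · simp only [hP.dysonPhillipsSum_of_nonpos _ ht]
  refine (hP.eq_dysonPhillipsSum_of_eq_add_duhamel (u := fun s => c • dysonPhillipsSum P B s f)
    ((hP.continuous_dysonPhillipsSum f).const_smul c) (fun r hr => ?_) ht).symm
  rw [duhamel_smul, hP.dysonPhillipsSum_eq_add_duhamel f hr, map_smul, smul_add]

theorem dysonPhillipsSum_add_time (hP : IsContractionSemigroup P) (f : X) {s t : ℝ}
    (hs : 0 ≤ s) (ht : 0 ≤ t) :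
    dysonPhillipsSum P B (s + t) f = dysonPhillipsSum P B s (dysonPhillipsSum P B t f) := by
  have hQ := hP.continuous_dysonPhillipsSum (B := B) f
  rw [add_comm]
  refine hP.eq_dysonPhillipsSum_of_eq_add_duhamel (hQ.comp (continuous_const_add t))
    (fun r hr => ?_) hs
  simp only [Function.comp_apply]
  rw [hP.dysonPhillipsSum_eq_add_duhamel f (add_nonneg ht hr), hP.duhamel_add_time hQ ht hr,
    hP.dysonPhillipsSum_eq_add_duhamel f ht, map_add, add_comm t r, hP.add_apply r t hr ht]
  abel

theorem tendsto_slope_dysonPhillipsSum_sub (hP : IsContractionSemigroup P) (f : X) :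
    Tendsto (fun t => t⁻¹ • (dysonPhillipsSum P B t f - f) - t⁻¹ • (P t f - f))
      (𝓝[>] 0) (𝓝 (B f)) := by
  have hlim : Tendsto (fun t => t⁻¹ • duhamel P B (fun s => dysonPhillipsSum P B s f) t)
      (𝓝[>] 0) (𝓝 (B (dysonPhillipsSum P B 0 f))) :=
    (hP.tendsto_inv_smul_duhamel (hP.continuous_dysonPhillipsSum f)).mono_left
      (nhdsWithin_mono _ fun t (ht : 0 < t) => ht.ne')
  rw [hP.dysonPhillipsSum_of_nonpos f le_rfl] at hlim
  refine hlim.congr' ?_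
  filter_upwards [self_mem_nhdsWithin] with t (ht : 0 < t)
  rw [hP.dysonPhillipsSum_eq_add_duhamel f ht.le, ← smul_sub]
  congr 1
  abel

theorem integral_exp_smul_apply (hP : IsContractionSemigroup P) {f g : X}
    (hg : Tendsto (fun ε : ℝ => ε⁻¹ • (P ε f - f)) (𝓝[>] 0) (𝓝 g)) (c : ℝ) {r : ℝ}
    (hr : 0 ≤ r) :
    ∫ τ in (0 : ℝ)..r, Real.exp (-(c * τ)) • P τ (c • f - g)
      = f - Real.exp (-(c * r)) • P r f := by
  have hexp : Continuous fun τ : ℝ => Real.exp (-(c * τ)) := by fun_prop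
  rw [intervalIntegral.integral_eq_sub_of_hasDeriv_right_of_le hr
    (f := fun τ => -(Real.exp (-(c * τ)) • P τ f))
    (f' := fun τ => Real.exp (-(c * τ)) • P τ (c • f - g))
    (hexp.smul (hP.continuous_apply f)).neg.continuousOn (fun τ hτ => ?_)
    ((hexp.smul (hP.continuous_apply _)).intervalIntegrable _ _)]
  · simp only [mul_zero, neg_zero, Real.exp_zero, hP.apply_of_nonpos 0 le_rfl, one_smul,
      sub_neg_eq_add]
    abel
  · have hexpd : HasDerivAt (fun τ : ℝ => Real.exp (-(c * τ))) (Real.exp (-(c * τ)) * -c) τ := by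
      simpa using ((hasDerivAt_id τ).const_mul c).neg.exp
    convert (hexpd.hasDerivWithinAt.smul (hP.hasDerivWithinAt_apply hg hτ.1.le)).neg using 1
    · rfl
    · rw [map_sub, map_smul]
      module

theorem dysonPhillipsSum_eq_exp_smul (hP : IsContractionSemigroup P) {f g : X}
    (hg : Tendsto (fun ε : ℝ => ε⁻¹ • (P ε f - f)) (𝓝[>] 0) (𝓝 g)) {c : ℝ}
    (hfg : B f + g = c • f) {t : ℝ} (ht : 0 ≤ t) :
    dysonPhillipsSum P B t f = Real.exp (c * t) • f := by
  refine (hP.eq_dysonPhillipsSum_of_eq_add_duhamel (u := fun r => Real.exp (c * r) • f)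
    (by fun_prop) (fun r hr => ?_) ht).symm
  have hintegrand : ∀ σ, P (r - σ) (B (Real.exp (c * σ) • f))
      = Real.exp (c * r) • (Real.exp (-(c * (r - σ))) • P (r - σ) (c • f - g)) := by
    intro σ
    rw [map_smul, eq_sub_of_add_eq hfg, map_smul, smul_smul, ← Real.exp_add]
    congr 2
    ring
  rw [duhamel, intervalIntegral.integral_congr fun σ _ => hintegrand σ,
    intervalIntegral.integral_smul, intervalIntegral.integral_comp_sub_left
      (fun τ => Real.exp (-(c * τ)) • P τ (c • f - g)) r, sub_self, sub_zero,
    hP.integral_exp_smul_apply hg c hr, smul_sub, smul_smul, ← Real.exp_add]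
  simp

/-- The semigroup generated by `G + B`, where `G` generates `P`. -/
noncomputable def perturbed (hP : IsContractionSemigroup P) (B : X →L[ℝ] X) (t : ℝ) :
    X →L[ℝ] X :=
  LinearMap.mkContinuous
    { toFun := dysonPhillipsSum P B t
      map_add' := hP.dysonPhillipsSum_add t
      map_smul' := hP.dysonPhillipsSum_smul t }
    (Real.exp (‖B‖ * max t 0)) (hP.norm_dysonPhillipsSum_le t)

@[simp]
theorem perturbed_apply (hP : IsContractionSemigroup P) (t : ℝ) (f : X) :
    hP.perturbed B t f = dysonPhillipsSum P B t f :=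
  rfl

end IsContractionSemigroup

end Perturbation

section RescaledConj

variable {A : Type*} [NormedRing A] [NormedAlgebra ℝ A]

/-- For `u = h` this is the compensated `h`-transform `e^{-ct} h⁻¹ Q_t h` of `Q`. -/
noncomputable def rescaledConj (u : Aˣ) (c : ℝ) (Q : ℝ → A →L[ℝ] A) (t : ℝ) : A →L[ℝ] A :=
  Real.exp (-(c * t)) •
    (ContinuousLinearMap.mul ℝ A ↑u⁻¹).comp ((Q t).comp (ContinuousLinearMap.mul ℝ A ↑u))

@[simp]
theorem rescaledConj_apply (u : Aˣ) (c : ℝ) (Q : ℝ → A →L[ℝ] A) (t : ℝ) (f : A) :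
    rescaledConj u c Q t f = Real.exp (-(c * t)) • (↑u⁻¹ * Q t (↑u * f)) :=
  rfl

theorem rescaledConj_inv_neg (u : Aˣ) (c : ℝ) (Q : ℝ → A →L[ℝ] A) :
    rescaledConj u⁻¹ (-c) (rescaledConj u c Q) = Q := by
  ext t f
  simp [smul_smul, ← Real.exp_add]

theorem tendsto_slope_rescaledConj {u : Aˣ} {c : ℝ} {Q : ℝ → A →L[ℝ] A} {f g : A}
    (h : Tendsto (fun t : ℝ => t⁻¹ • (Q t (↑u * f) - ↑u * f)) (𝓝[>] 0) (𝓝 g)) :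
    Tendsto (fun t : ℝ => t⁻¹ • (rescaledConj u c Q t f - f)) (𝓝[>] 0)
      (𝓝 (↑u⁻¹ * g - c • f)) := by
  have hexp : Tendsto (fun t : ℝ => Real.exp (-(c * t))) (𝓝[>] 0) (𝓝 1) := by
    simpa using ((by fun_prop : Continuous fun t : ℝ => Real.exp (-(c * t))).tendsto 0).mono_left
      nhdsWithin_le_nhds
  have hrate : Tendsto (fun t : ℝ => t⁻¹ • (Real.exp (-(c * t)) - 1)) (𝓝[>] 0) (𝓝 (-c)) := by
    have hd : HasDerivAt (fun t : ℝ => Real.exp (-(c * t))) (-c) 0 := by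
      simpa using ((hasDerivAt_id (0 : ℝ)).const_mul c).neg.exp
    simpa using hd.tendsto_slope_zero_right
  have hlim := (hexp.smul (((continuous_const_mul (↑u⁻¹ : A)).tendsto g).comp h)).add
    (hrate.smul_const f)
  rw [one_smul, neg_smul, ← sub_eq_add_neg] at hlim
  refine hlim.congr fun t => ?_
  simp only [Function.comp_apply, rescaledConj_apply, mul_smul_comm, mul_sub,
    Units.inv_mul_cancel_left, smul_eq_mul]
  module

end RescaledConj

section ContinuousFunctions

instance ContinuousMap.instOrderClosedTopology {α β : Type*} [TopologicalSpace α]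
    [TopologicalSpace β] [PartialOrder β] [OrderClosedTopology β] :
    OrderClosedTopology C(α, β) where
  isClosed_le' := by
    simp only [ContinuousMap.le_def, ofPred_forall]
    exact isClosed_iInter fun x =>
      isClosed_le ((continuous_eval_const x).comp continuous_fst)
        ((continuous_eval_const x).comp continuous_snd)

variable {α : Type*} [TopologicalSpace α]

theorem ContinuousMap.units_inv_apply (u : C(α, ℝ)ˣ) (x : α) :
    (↑u⁻¹ : C(α, ℝ)) x = ((u : C(α, ℝ)) x)⁻¹ :=
  eq_inv_of_mul_eq_one_left <| by rw [← ContinuousMap.mul_apply, u.inv_mul, ContinuousMap.one_apply]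

theorem IsGeneratorOf.congr {S S' : ℝ → C(α, ℝ) →L[ℝ] C(α, ℝ)} {D : Set C(α, ℝ)}
    {G : C(α, ℝ) → C(α, ℝ)} (h : IsGeneratorOf S D G) (hS : ∀ t > 0, S' t = S t) :
    IsGeneratorOf S' D G := by
  have hslope : ∀ f : C(α, ℝ), (fun t : ℝ => t⁻¹ • (S t f - f)) =ᶠ[𝓝[>] 0]
      fun t => t⁻¹ • (S' t f - f) :=
    fun f => eventually_nhdsWithin_of_forall fun t ht => by simp only [hS t ht]
  exact ⟨fun f hf => (h.1 f hf).congr' (hslope f),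
    fun f ⟨g, hg⟩ => h.2 f ⟨g, hg.congr' (hslope f).symm⟩⟩

variable [CompactSpace α]

theorem ContinuousMap.norm_smul_one_sub_nonneg (f : C(α, ℝ)) : 0 ≤ ‖f‖ • 1 - f :=
  ContinuousMap.le_def.2 fun x => by simpa using (le_abs_self (f x)).trans (f.norm_coe_le_norm x)

theorem ContinuousLinearMap.norm_apply_le_of_nonneg_of_map_one (T : C(α, ℝ) →L[ℝ] C(α, ℝ))
    (hpos : ∀ f, 0 ≤ f → 0 ≤ T f) (h1 : T 1 = 1) (f : C(α, ℝ)) : ‖T f‖ ≤ ‖f‖ := by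
  have hupper := ContinuousMap.le_def.1 (hpos _ f.norm_smul_one_sub_nonneg)
  have hlower := ContinuousMap.le_def.1 (hpos _ (-f).norm_smul_one_sub_nonneg)
  refine (ContinuousMap.norm_le _ (norm_nonneg f)).2 fun x => abs_le.2 ⟨?_, ?_⟩
  · simpa [h1, neg_le_iff_add_nonneg'] using hlower x
  · simpa [h1] using hupper x

theorem IsFellerSG.isContractionSemigroup {S : ℝ → C(α, ℝ) →L[ℝ] C(α, ℝ)} (hS : IsFellerSG S) :
    IsContractionSemigroup fun t => S (max t 0) := by
  obtain ⟨⟨h0, hadd⟩, hright, hpos, h1⟩ := hS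
  refine .of_tendsto_nhdsGT (fun t ht f => ?_) (fun s t hs ht f => ?_) (fun t f => ?_) (fun f => ?_)
  · simp [max_eq_right ht, h0]
  · simp [hs, ht, add_nonneg, hadd]
  · exact (S _).norm_apply_le_of_nonneg_of_map_one (hpos _ (le_max_right t 0))
      (h1 _ (le_max_right t 0)) f
  · exact (hright f).congr' <| eventually_nhdsWithin_of_forall fun t (ht : 0 < t) => by
      simp [max_eq_left ht.le]

namespace IsContractionSemigroup

variable {P : ℝ → C(α, ℝ) →L[ℝ] C(α, ℝ)}

theorem isGeneratorOf_perturbed (hP : IsContractionSemigroup P) {D : Set C(α, ℝ)}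
    {G : C(α, ℝ) → C(α, ℝ)} (h : IsGeneratorOf P D G) (B : C(α, ℝ) →L[ℝ] C(α, ℝ)) :
    IsGeneratorOf (hP.perturbed B) D fun f => G f + B f := by
  refine ⟨fun f hf => ?_, fun f ⟨g, hg⟩ => h.2 f ⟨g - B f, ?_⟩⟩
  · simpa using (h.1 f hf).add (hP.tendsto_slope_dysonPhillipsSum_sub f)
  · simpa using hg.sub (hP.tendsto_slope_dysonPhillipsSum_sub (B := B) f)

theorem isSemigroupOn_perturbed (hP : IsContractionSemigroup P) (B : C(α, ℝ) →L[ℝ] C(α, ℝ)) :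
    IsSemigroupOn (hP.perturbed B) :=
  ⟨ContinuousLinearMap.ext fun f => hP.dysonPhillipsSum_of_nonpos f le_rfl,
    fun _ _ hs ht => ContinuousLinearMap.ext fun f => hP.dysonPhillipsSum_add_time f hs ht⟩

theorem stronglyContinuousSG_perturbed (hP : IsContractionSemigroup P)
    (B : C(α, ℝ) →L[ℝ] C(α, ℝ)) : StronglyContinuousSG (hP.perturbed B) := fun f => by
  simpa [hP.dysonPhillipsSum_of_nonpos f le_rfl] using
    ((hP.continuous_dysonPhillipsSum (B := B) f).tendsto 0).mono_left nhdsWithin_le_nhds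

theorem positiveSG_perturbed (hP : IsContractionSemigroup P) (hPpos : PositiveSG P)
    {B : C(α, ℝ) →L[ℝ] C(α, ℝ)} (hB : ∀ f, 0 ≤ f → 0 ≤ B f) : PositiveSG (hP.perturbed B) :=
  fun t _ _ hf => dysonPhillipsSum_nonneg hPpos hB hf t

end IsContractionSemigroup

variable {Q : ℝ → C(α, ℝ) →L[ℝ] C(α, ℝ)} (u : C(α, ℝ)ˣ) (c : ℝ)

theorem IsSemigroupOn.rescaledConj (hQ : IsSemigroupOn Q) : IsSemigroupOn (rescaledConj u c Q) := by
  refine ⟨ContinuousLinearMap.ext fun f => by simp [hQ.1],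
    fun s t hs ht => ContinuousLinearMap.ext fun f => ?_⟩
  simp [hQ.2 s t hs ht, smul_smul, ← Real.exp_add, mul_add, add_comm]

theorem StronglyContinuousSG.rescaledConj (hQ : StronglyContinuousSG Q) :
    StronglyContinuousSG (rescaledConj u c Q) := fun f => by
  have hexp : Tendsto (fun t : ℝ => Real.exp (-(c * t))) (𝓝[>] 0) (𝓝 1) := by
    simpa using ((by fun_prop : Continuous fun t : ℝ => Real.exp (-(c * t))).tendsto 0).mono_left
      nhdsWithin_le_nhds
  simpa using hexp.smul (((continuous_const_mul (↑u⁻¹ : C(α, ℝ))).tendsto _).comp (hQ (↑u * f)))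

theorem PositiveSG.rescaledConj (hQ : PositiveSG Q) (hu : 0 ≤ (u : C(α, ℝ)))
    (hu' : 0 ≤ (↑u⁻¹ : C(α, ℝ))) : PositiveSG (rescaledConj u c Q) := fun t ht _ hf =>
  smul_nonneg (Real.exp_pos _).le (mul_nonneg hu' (hQ t ht _ (mul_nonneg hu hf)))

theorem rescaledConj_apply_one {t : ℝ} (h : Q t u = Real.exp (c * t) • (u : C(α, ℝ))) :
    rescaledConj u c Q t 1 = 1 := by
  simp [h, smul_smul, ← Real.exp_add]

theorem IsGeneratorOf.rescaledConj {D : Set C(α, ℝ)} {G : C(α, ℝ) → C(α, ℝ)}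
    (h : IsGeneratorOf Q D G) :
    IsGeneratorOf (rescaledConj u c Q) {f | ↑u * f ∈ D} fun f => ↑u⁻¹ * G (↑u * f) - c • f := by
  refine ⟨fun f hf => tendsto_slope_rescaledConj (h.1 _ hf), fun f ⟨g, hg⟩ => ?_⟩
  have hback := tendsto_slope_rescaledConj (u := u⁻¹) (c := -c) (Q := _root_.rescaledConj u c Q)
    (f := ↑u * f) (by simpa only [Units.inv_mul_cancel_left] using hg)
  rw [rescaledConj_inv_neg] at hback
  exact h.2 _ ⟨_, hback⟩

theorem isFellerSG_rescaledConj (hQ : IsSemigroupOn Q) (hQc : StronglyContinuousSG Q)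
    (hQp : PositiveSG Q) (hu : 0 ≤ (u : C(α, ℝ))) (hu' : 0 ≤ (↑u⁻¹ : C(α, ℝ)))
    (hQu : ∀ t, 0 ≤ t → Q t u = Real.exp (c * t) • (u : C(α, ℝ))) :
    IsFellerSG (rescaledConj u c Q) :=
  ⟨hQ.rescaledConj u c, hQc.rescaledConj u c, hQp.rescaledConj u c hu hu',
    fun t ht => rescaledConj_apply_one u c (hQu t ht)⟩

end ContinuousFunctions

/-- Lemma 3 (Compensated h-transform), semigroup part: if `G` generates a Feller semigroup
on `C(E)` and `h ∈ D(G)` with `h > 0`, then `Gʰ f := (1/h)(G(hf) - (Gh)f)`, with domain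
`{f : h ⬝ f ∈ D(G)}`, generates a Feller semigroup on `C(E)`. -/
theorem statement8 (S : ℝ → C(E, ℝ) →L[ℝ] C(E, ℝ))
    (D : Set C(E, ℝ)) (G : C(E, ℝ) → C(E, ℝ))
    (hS : IsFellerSG S) (hgen : IsGeneratorOf S D G)
    (h : C(E, ℝ)) (hD : h ∈ D) (hpos : ∀ x : E, 0 < h x) :
    ∃ (S' : ℝ → C(E, ℝ) →L[ℝ] C(E, ℝ)) (G' : C(E, ℝ) → C(E, ℝ)),
      IsFellerSG S' ∧
      IsGeneratorOf S' {f : C(E, ℝ) | h * f ∈ D} G' ∧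
      ∀ f : C(E, ℝ), h * f ∈ D →
        ∀ x : E, G' f x = (G (h * f) x - G h x * f x) / h x := by
  have hP := hS.isContractionSemigroup
  have hgenP : IsGeneratorOf (fun t => S (max t 0)) D G :=
    hgen.congr fun t ht => by rw [max_eq_left ht.le]
  obtain ⟨u, rfl⟩ : IsUnit h :=
    (ContinuousMap.isUnit_iff_forall_ne_zero h).2 fun x => (hpos x).ne'
  set c := ‖↑u⁻¹ * G u‖
  set W : C(E, ℝ) := c • 1 - ↑u⁻¹ * G u
  have hWu : W * u + G u = c • (u : C(E, ℝ)) := by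
    rw [sub_mul, smul_one_mul, mul_comm _ (G u), mul_assoc, u.inv_mul, mul_one, sub_add_cancel]
  set B := ContinuousLinearMap.mul ℝ C(E, ℝ) W
  have hQpos : PositiveSG (hP.perturbed B) :=
    hP.positiveSG_perturbed (fun t _ => hS.2.2.1 _ (le_max_right t 0))
      fun f hf => mul_nonneg (ContinuousMap.norm_smul_one_sub_nonneg _) hf
  have hQu : ∀ t, 0 ≤ t → hP.perturbed B t u = Real.exp (c * t) • (u : C(E, ℝ)) :=
    fun t ht => hP.dysonPhillipsSum_eq_exp_smul (hgenP.1 _ hD) hWu ht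
  refine ⟨rescaledConj u c (hP.perturbed B), _,
    isFellerSG_rescaledConj u c (hP.isSemigroupOn_perturbed B)
      (hP.stronglyContinuousSG_perturbed B) hQpos (ContinuousMap.le_def.2 fun x => (hpos x).le)
      (ContinuousMap.le_def.2 fun x => by simpa [ContinuousMap.units_inv_apply] using (hpos x).le)
      hQu,
    (hP.isGeneratorOf_perturbed hgenP B).rescaledConj u c, fun f _ x => ?_⟩
  simp only [B, W, ContinuousLinearMap.mul_apply', ContinuousMap.sub_apply, ContinuousMap.add_apply,
    ContinuousMap.mul_apply, ContinuousMap.smul_apply, ContinuousMap.one_apply, smul_eq_mul,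
    ContinuousMap.units_inv_apply]
  field_simp [(hpos x).ne']
  ring
end

section
/- Let G be the generator of a Feller semigroup S on C(E), let h ∈ D(G) satisfy h(x) > 0 for all x ∈ E, and let α, β ∈ C(E) with α ≥ 0. Define G^h f := (1/h)·(G(h·f) − (Gh)·f) with domain D(G^h) := {f ∈ C(E) : h·f ∈ D(G)}. If u : [0,∞) → C(E) is continuously differentiable with u_t ∈ D(G) and ∂u_t/∂t = G u_t + β u_t − α u_t² for all t ≥ 0, then the map u^h : [0,∞) → C(E) defined by u^h_t := u_t/h (pointwise quotient) is continuously differentiable, satisfies u^h_t ∈ D(G^h), and ∂u^h_t/∂t = G^h u^h_t + (β + (Gh)/h)·u^h_t − (h·α)·(u^h_t)² for all t ≥ 0, with u^h_0 = u_0/h. -/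
/-! Since `h` is a unit of `C(E, ℝ)`, `uʰ t = h⁻¹ * u t` is a fixed multiple of `u t`, so it is
differentiable with derivative `h⁻¹ * (G u + β u - α u²)`. Substituting `u = h uʰ` and adding and
subtracting `(Gh) uʰ / h` rewrites this as `Gʰ uʰ + (β + (Gh)/h) uʰ - (hα) (uʰ)²`. -/

open Filter Topology Set MeasureTheory

variable {E : Type*} [TopologicalSpace E] [CompactSpace E] [TopologicalSpace.MetrizableSpace E] [Nonempty E]

open scoped Ring

namespace ContinuousMap

lemma ringInverse_apply {X : Type*} [TopologicalSpace X] {h : C(X, ℝ)} (hh : IsUnit h) (x : X) :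
    h⁻¹ʳ x = (h x)⁻¹ :=
  eq_inv_of_mul_eq_one_left <| by rw [← mul_apply, Ring.inverse_mul_cancel h hh, one_apply]

end ContinuousMap

lemma inv_mul_reaction_eq_htransform {h : ℝ} (hh : h ≠ 0) (w g b a v : ℝ) :
    h⁻¹ * (w + b * (h * v) - a * (h * v) ^ 2)
      = (w - g * v) / h + (b + g / h) * v - h * a * v ^ 2 := by
  field_simp
  ring

theorem statement9_general
    (D : Set C(E, ℝ)) (G : C(E, ℝ) → C(E, ℝ))
    (h : C(E, ℝ)) (hpos : ∀ x : E, 0 < h x)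
    (α β : C(E, ℝ))
    -- `u` is a classical solution of `∂u/∂t = G u + β u - α u²` on `[0,∞)`
    (u : ℝ → C(E, ℝ)) (huD : ∀ t ∈ Ici (0 : ℝ), u t ∈ D)
    (hu' : ∀ t ∈ Ici (0 : ℝ),
      HasDerivWithinAt u (G (u t) + β * u t - α * u t ^ 2) (Ici 0) t)
    (hucont : ContinuousOn (fun t => G (u t) + β * u t - α * u t ^ 2) (Ici 0))
    -- `uh` is the map `uʰ t = u t / h` (pointwise quotient)
    (uh : ℝ → C(E, ℝ)) (huh : ∀ t : ℝ, ∀ x : E, uh t x = u t x / h x) :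
    -- `uʰ t` lies in the domain of `Gʰ`, i.e. `h ⬝ uʰ t ∈ D(G)`
    (∀ t ∈ Ici (0 : ℝ), h * uh t ∈ D) ∧
    -- `uʰ 0 = u 0 / h`
    (∀ x : E, uh 0 x = u 0 x / h x) ∧
    -- `uʰ` is continuously differentiable with
    -- `∂uʰ/∂t = Gʰ uʰ + (β + (Gh)/h) uʰ - (hα) (uʰ)²`
    ∃ uh' : ℝ → C(E, ℝ),
      ContinuousOn uh' (Ici 0) ∧
      (∀ t ∈ Ici (0 : ℝ), HasDerivWithinAt uh (uh' t) (Ici 0) t) ∧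
      ∀ t ∈ Ici (0 : ℝ), ∀ x : E,
        uh' t x = (G (h * uh t) x - G h x * uh t x) / h x
          + (β x + G h x / h x) * uh t x - (h x * α x) * uh t x ^ 2 := by
  have hne (x : E) : h x ≠ 0 := (hpos x).ne'
  have hunit : IsUnit h := (ContinuousMap.isUnit_iff_forall_ne_zero h).2 hne
  have hu_eq (t : ℝ) : u t = h * uh t :=
    ContinuousMap.ext fun x => by rw [ContinuousMap.mul_apply, huh, mul_div_cancel₀ _ (hne x)]
  have huh_eq : uh = fun t => h⁻¹ʳ * u t :=
    funext fun t => by rw [hu_eq, Ring.inverse_mul_cancel_left _ _ hunit]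
  refine ⟨fun t ht => hu_eq t ▸ huD t ht, huh 0, fun t => h⁻¹ʳ * (G (u t) + β * u t - α * u t ^ 2),
    continuousOn_const.mul hucont, fun t ht => huh_eq ▸ (hu' t ht).const_mul _, fun t _ x => ?_⟩
  have hu_apply : u t x = h x * uh t x := by rw [hu_eq t, ContinuousMap.mul_apply]
  rw [← hu_eq t]
  simp only [ContinuousMap.mul_apply, ContinuousMap.add_apply, ContinuousMap.sub_apply,
    ContinuousMap.pow_apply, ContinuousMap.ringInverse_apply hunit, hu_apply]
  exact inv_mul_reaction_eq_htransform (hne x) _ _ _ _ _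

/-- Computation in the proof of Lemma 5: if `u` is a classical solution of
`∂u/∂t = G u + β u - α u²` on `[0,∞)` and `uʰ t := u t / h` (pointwise), then `uʰ` is a
classical solution of `∂uʰ/∂t = Gʰ uʰ + (β + (Gh)/h) uʰ - (hα) (uʰ)²`, where
`Gʰ f = (1/h)(G(hf) - (Gh)f)` on `{f : h ⬝ f ∈ D(G)}`, with `uʰ 0 = u 0 / h`. -/
theorem statement9 (S : ℝ → C(E, ℝ) →L[ℝ] C(E, ℝ))
    (D : Set C(E, ℝ)) (G : C(E, ℝ) → C(E, ℝ))
    (hS : IsFellerSG S) (hgen : IsGeneratorOf S D G)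
    (h : C(E, ℝ)) (hD : h ∈ D) (hpos : ∀ x : E, 0 < h x)
    (α β : C(E, ℝ)) (hα : 0 ≤ α)
    -- `u` is a classical solution of `∂u/∂t = G u + β u - α u²` on `[0,∞)`
    (u : ℝ → C(E, ℝ)) (huD : ∀ t ∈ Ici (0 : ℝ), u t ∈ D)
    (hu' : ∀ t ∈ Ici (0 : ℝ),
      HasDerivWithinAt u (G (u t) + β * u t - α * u t ^ 2) (Ici 0) t)
    (hucont : ContinuousOn (fun t => G (u t) + β * u t - α * u t ^ 2) (Ici 0))
    -- `uh` is the map `uʰ t = u t / h` (pointwise quotient)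
    (uh : ℝ → C(E, ℝ)) (huh : ∀ t : ℝ, ∀ x : E, uh t x = u t x / h x) :
    -- `uʰ t` lies in the domain of `Gʰ`, i.e. `h ⬝ uʰ t ∈ D(G)`
    (∀ t ∈ Ici (0 : ℝ), h * uh t ∈ D) ∧
    -- `uʰ 0 = u 0 / h`
    (∀ x : E, uh 0 x = u 0 x / h x) ∧
    -- `uʰ` is continuously differentiable with
    -- `∂uʰ/∂t = Gʰ uʰ + (β + (Gh)/h) uʰ - (hα) (uʰ)²`
    ∃ uh' : ℝ → C(E, ℝ),
      ContinuousOn uh' (Ici 0) ∧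
      (∀ t ∈ Ici (0 : ℝ), HasDerivWithinAt uh (uh' t) (Ici 0) t) ∧
      ∀ t ∈ Ici (0 : ℝ), ∀ x : E,
        uh' t x = (G (h * uh t) x - G h x * uh t x) / h x
          + (β x + G h x / h x) * uh t x - (h x * α x) * uh t x ^ 2 :=
  statement9_general D G h hpos α β u huD hu' hucont uh huh
end

section
/- Let E be a Polish space, let μ be an atomless Borel measure on E with μ(E) = ∞, and let Z be a random finite measure on E (defined on a probability space (Ω, F, P)) such that P[Z(A) = 0] = e^{−μ(A)} for every Borel set A ⊆ E (with the convention e^{−∞} := 0). Then almost surely supp(Z) is an infinite set; equivalently, P[supp(Z) is finite] = 0. -/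
/-!
An atomless measure of infinite total mass on a second countable T1 space admits measurable sets
`B n` of infinite measure such that every point lies in only finitely many of them. If `μ` is
locally finite it is σ-finite, and the complements of its spanning sets will do; otherwise some
point `x` has only neighbourhoods of infinite measure, and a shrinking basis of punctured
neighbourhoods of `x` will do, the puncture costing nothing since `μ {x} = 0`.
Almost surely `Z (B n) ≠ 0` for all `n`, so the support of `Z` meets every `B n`, which a finite
set cannot do.
-/

open MeasureTheory Set

/-- The (topological) support of a measure `ν`: the set of points all of whose open
neighbourhoods have positive measure. -/
def measSupport {E : Type*} [TopologicalSpace E] [MeasurableSpace E] (ν : Measure E) : Set E :=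
  {x | ∀ U : Set E, IsOpen U → x ∈ U → 0 < ν U}

open Filter Topology ENNReal

section

variable {E : Type*} [MeasurableSpace E] {μ : Measure E}

theorem exists_seq_measure_eq_top_eventually_notMem_of_sigmaFinite [SigmaFinite μ]
    (hμ : μ univ = ∞) :
    ∃ B : ℕ → Set E, (∀ n, MeasurableSet (B n)) ∧ (∀ n, μ (B n) = ∞) ∧
      ∀ x, ∀ᶠ n in atTop, x ∉ B n := by
  refine ⟨fun n => (spanningSets μ n)ᶜ, fun n => (measurableSet_spanningSets μ n).compl,
    fun n => ?_, fun x => (eventually_mem_spanningSets μ x).mono fun _ hx => not_not_intro hx⟩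
  rw [measure_compl (measurableSet_spanningSets μ n) (measure_spanningSets_lt_top μ n).ne, hμ,
    top_sub (measure_spanningSets_lt_top μ n).ne]

variable [TopologicalSpace E]

theorem measSupport_eq_support (ν : Measure E) : measSupport ν = ν.support := by
  simp only [measSupport, Measure.support_eq_forall_isOpen]
  grind

variable [OpensMeasurableSpace E]

theorem exists_seq_measure_eq_top_eventually_notMem_of_not_finiteAtFilter
    [FirstCountableTopology E] [T1Space E] [NullSingletonClass μ] {x : E}
    (hx : ¬ μ.FiniteAtFilter (𝓝 x)) :
    ∃ B : ℕ → Set E, (∀ n, MeasurableSet (B n)) ∧ (∀ n, μ (B n) = ∞) ∧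
      ∀ y, ∀ᶠ n in atTop, y ∉ B n := by
  obtain ⟨s, hs, hbasis⟩ := (nhds_basis_opens x).exists_antitone_subbasis
  refine ⟨fun n => s n \ {x}, fun n => (hs n).2.measurableSet.diff (measurableSet_singleton x),
    fun n => ?_, fun y => ?_⟩
  · rw [measure_sdiff_null (measure_singleton x)]
    by_contra h
    exact hx ⟨s n, hbasis.mem n, lt_top_iff_ne_top.2 h⟩
  · rcases eq_or_ne y x with rfl | hyx
    · exact Eventually.of_forall fun n hy => hy.2 rfl
    · exact (hbasis.eventually_subset (compl_singleton_mem_nhds hyx.symm)).mono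
        fun n hn hy => hn hy.1 rfl

theorem exists_seq_measure_eq_top_eventually_notMem [SecondCountableTopology E] [T1Space E]
    [NullSingletonClass μ] (hμ : μ univ = ∞) :
    ∃ B : ℕ → Set E, (∀ n, MeasurableSet (B n)) ∧ (∀ n, μ (B n) = ∞) ∧
      ∀ x, ∀ᶠ n in atTop, x ∉ B n := by
  by_cases hfin : IsLocallyFiniteMeasure μ
  · exact exists_seq_measure_eq_top_eventually_notMem_of_sigmaFinite hμ
  · obtain ⟨x, hx⟩ : ∃ x, ¬ μ.FiniteAtFilter (𝓝 x) := by
      by_contra! h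
      exact hfin ⟨h⟩
    exact exists_seq_measure_eq_top_eventually_notMem_of_not_finiteAtFilter hx

end

theorem statement14_general {E : Type*} [TopologicalSpace E] [PolishSpace E]
    [MeasurableSpace E] [BorelSpace E]
    {Ω : Type*} [MeasurableSpace Ω] (P : Measure Ω)
    (μ : Measure E) [NullSingletonClass μ] (hμ : μ Set.univ = ⊤)
    (Z : Ω → Measure E)
    (hZ : ∀ A : Set E, MeasurableSet A →
      P {ω | Z ω A = 0} =
        if μ A = ⊤ then 0 else ENNReal.ofReal (Real.exp (-(μ A).toReal))) :
    P {ω | (measSupport (Z ω)).Finite} = 0 := by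
  obtain ⟨B, hBmeas, hBμ, hBescape⟩ := exists_seq_measure_eq_top_eventually_notMem hμ
  have hnull : P (⋃ n, {ω | Z ω (B n) = 0}) = 0 :=
    measure_iUnion_null fun n => by rw [hZ _ (hBmeas n), if_pos (hBμ n)]
  refine measure_mono_null (fun ω hfin => ?_) hnull
  obtain ⟨n, hn⟩ := ((eventually_all_finite hfin).2 fun x _ => hBescape x).exists
  refine mem_iUnion.2 ⟨n, ?_⟩
  by_contra hpos
  obtain ⟨x, hxB, hxZ⟩ := Measure.nonempty_inter_support_of_pos (pos_iff_ne_zero.2 hpos)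
  exact hn x (measSupport_eq_support (Z ω) ▸ hxZ) hxB

/-- Lemma 35 (Random measures with Poisson support), infinite-intensity case: if `Z` is a
random finite measure on a Polish space `E` with `P[Z(A) = 0] = exp(-μ(A))` for every Borel
set `A` (with `exp(-∞) := 0`), where `μ` is an atomless measure with `μ(E) = ∞`, then a.s.
`supp(Z)` is infinite. -/
theorem statement14 {E : Type*} [TopologicalSpace E] [PolishSpace E]
    [MeasurableSpace E] [BorelSpace E]
    {Ω : Type*} [MeasurableSpace Ω] (P : Measure Ω) [IsProbabilityMeasure P]
    (μ : Measure E) [NullSingletonClass μ] (hμ : μ Set.univ = ⊤)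
    (Z : Ω → Measure E) (hZfin : ∀ ω, IsFiniteMeasure (Z ω))
    (hZmeas : ∀ A : Set E, MeasurableSet A → Measurable fun ω => Z ω A)
    (hZ : ∀ A : Set E, MeasurableSet A →
      P {ω | Z ω A = 0} =
        if μ A = ⊤ then 0 else ENNReal.ofReal (Real.exp (-(μ A).toReal))) :
    P {ω | (measSupport (Z ω)).Finite} = 0 :=
  statement14_general P μ hμ Z hZ
end

section
/- Let G be the generator of a Feller semigroup S on C(E), and let α, β ∈ C(E) with α ≥ 0 and β ≤ α pointwise. Then for every f ∈ C(E) with 0 ≤ f ≤ 1, the unique mild solution u of the Cauchy problem ∂u_t/∂t = G u_t + β u_t − α u_t², u_0 = f, satisfies 0 ≤ u_t ≤ 1 for all t ≥ 0. -/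
open Filter Topology Set MeasureTheory

variable {E : Type*} [TopologicalSpace E] [CompactSpace E] [TopologicalSpace.MetrizableSpace E] [Nonempty E]

/-!
Put `c = ‖α‖ + ‖β‖`. Adding `c u` to both sides of the equation turns the mild formulation into
`u t = e^{-ct} S t f + ∫₀ᵗ e^{-c(t-s)} S (t-s) (c u s + β u s - α u s²) ds`, and the shifted
nonlinearity `y ↦ c y + β y - α y²` maps the order interval `[0, 1]` into `[0, c]` (at `y = 1`
this is exactly `β ≤ α`). Since `S` is positive with `S t 1 = 1`, substituting for `u` its
pointwise truncation `v` to `[0, 1]` on the right-hand side produces an element of `[0, 1]`.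
The truncation is a nearest point of `[0, 1]`, so the distance `ε t = ‖u t - v t‖` of `u t` to
`[0, 1]` is at most the distance to that element, which the local Lipschitz bound of the
nonlinearity controls by `K ∫₀ᵗ ε`. Grönwall's inequality then forces `ε = 0`.
-/

theorem abs_sub_projIcc_le {a b x z : ℝ} (hab : a ≤ b) (hz : z ∈ Icc a b) :
    |x - projIcc a b hab x| ≤ |x - z| := by
  rcases le_total x a with hxa | hax
  · rw [projIcc_of_le_left hab hxa, abs_of_nonpos (by linarith),
      abs_of_nonpos (by linarith [hz.1])]
    linarith [hz.1]
  rcases le_total x b with hxb | hbx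
  · simp [projIcc_of_mem hab ⟨hax, hxb⟩]
  · rw [projIcc_of_right_le hab hbx, abs_of_nonneg (by linarith),
      abs_of_nonneg (by linarith [hz.2])]
    linarith [hz.2]

namespace ContinuousMap

variable {X : Type*} [TopologicalSpace X]

instance {β : Type*} [TopologicalSpace β] [PartialOrder β] [OrderClosedTopology β] :
    OrderClosedTopology C(X, β) where
  isClosed_le' := by
    simp only [le_def, ofPred_forall]
    exact isClosed_iInter fun x => isClosed_le ((continuous_eval_const x).comp continuous_fst)
      ((continuous_eval_const x).comp continuous_snd)

noncomputable def clampUnit : C(X, ℝ) → C(X, ℝ) :=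
  ContinuousMap.comp ⟨fun r => projIcc (0 : ℝ) 1 zero_le_one r, by fun_prop⟩

theorem continuous_clampUnit : Continuous (clampUnit (X := X)) :=
  continuous_postcomp _

theorem clampUnit_mem_Icc (g : C(X, ℝ)) : clampUnit g ∈ Icc 0 1 :=
  ⟨fun x => (projIcc 0 1 zero_le_one (g x)).2.1, fun x => (projIcc 0 1 zero_le_one (g x)).2.2⟩

variable [CompactSpace X]

theorem norm_le_iff_mem_Icc_smul_one (g : C(X, ℝ)) {r : ℝ} (hr : 0 ≤ r) :
    ‖g‖ ≤ r ↔ g ∈ Icc (-(r • 1)) (r • 1) := by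
  simp only [norm_le g hr, Real.norm_eq_abs, abs_le, mem_Icc, le_def, neg_apply, smul_apply,
    one_apply, smul_eq_mul, mul_one, forall_and]

theorem norm_clampUnit_le_one (g : C(X, ℝ)) : ‖clampUnit g‖ ≤ 1 :=
  (norm_le_iff_mem_Icc_smul_one _ zero_le_one).2
    ⟨(neg_nonpos.2 (by simp)).trans (clampUnit_mem_Icc g).1, by simpa using (clampUnit_mem_Icc g).2⟩

theorem norm_sub_clampUnit_le {g z : C(X, ℝ)} (hz : z ∈ Icc 0 1) :
    ‖g - clampUnit g‖ ≤ ‖g - z‖ := by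
  refine (norm_le _ (norm_nonneg _)).2 fun x => ?_
  calc |g x - projIcc 0 1 zero_le_one (g x)| ≤ |g x - z x| :=
        abs_sub_projIcc_le zero_le_one ⟨hz.1 x, hz.2 x⟩
    _ ≤ ‖g - z‖ := (g - z).norm_coe_le_norm x

end ContinuousMap

section OrderedIntegral

variable {F : Type*} [NormedAddCommGroup F] [NormedSpace ℝ F] [PartialOrder F]
  [IsOrderedAddMonoid F] [IsOrderedModule ℝ F] [ClosedIciTopology F] {w w' : ℝ → F} {a b : ℝ}

theorem intervalIntegral_nonneg_of_forall_mem (hab : a ≤ b) (h : ∀ s ∈ Icc a b, 0 ≤ w s) :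
    0 ≤ ∫ s in a..b, w s := by
  rw [intervalIntegral.integral_of_le hab]
  exact integral_nonneg_of_ae <| ae_restrict_of_forall_mem measurableSet_Ioc fun s hs =>
    h s (Ioc_subset_Icc_self hs)

theorem intervalIntegral_mono_of_forall_mem (hab : a ≤ b) (hw : IntervalIntegrable w volume a b)
    (hw' : IntervalIntegrable w' volume a b) (h : ∀ s ∈ Icc a b, w s ≤ w' s) :
    ∫ s in a..b, w s ≤ ∫ s in a..b, w' s := by
  rw [← sub_nonneg, ← intervalIntegral.integral_sub hw' hw]
  exact intervalIntegral_nonneg_of_forall_mem hab fun s hs => sub_nonneg.2 (h s hs)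

end OrderedIntegral

theorem eqOn_zero_of_le_mul_integral {ε : ℝ → ℝ} {K T : ℝ} (hε : ContinuousOn ε (Icc 0 T))
    (hε0 : ∀ t ∈ Icc 0 T, 0 ≤ ε t) (hle : ∀ t ∈ Icc 0 T, ε t ≤ K * ∫ s in (0 : ℝ)..t, ε s) :
    EqOn ε 0 (Icc 0 T) := by
  have hψ0 : ∀ t ∈ Icc 0 T, 0 ≤ ∫ s in (0 : ℝ)..t, ε s := fun t ht =>
    intervalIntegral.integral_nonneg ht.1 fun s hs => hε0 s ⟨hs.1, hs.2.trans ht.2⟩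
  have hψ : ∀ t ∈ Icc 0 T, ∫ s in (0 : ℝ)..t, ε s = 0 := by
    refine eq_zero_of_abs_deriv_le_mul_abs_self_of_eq_zero_right (f' := ε) (K := K) ?_ ?_
      intervalIntegral.integral_same ?_
    · exact (intervalIntegral.continuousOn_primitive hε.integrableOn_Icc).congr fun t ht =>
        intervalIntegral.integral_of_le ht.1
    · intro x hx
      have hmem : Icc 0 T ∈ 𝓝[Ici x] x :=
        mem_of_superset (Icc_mem_nhdsGE hx.2) (Icc_subset_Icc_left hx.1)
      exact intervalIntegral.integral_hasDerivWithinAt_right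
        ((hε.mono (Icc_subset_Icc_right hx.2.le)).intervalIntegrable_of_Icc hx.1)
        ((hε.stronglyMeasurableAtFilter_nhdsWithin measurableSet_Icc x).filter_mono
          ((nhdsWithin_mono _ Ioi_subset_Ici_self).trans (nhdsWithin_le_of_mem hmem)))
        (((hε x (Ico_subset_Icc_self hx)).mono_of_mem_nhdsWithin hmem).mono Ioi_subset_Ici_self)
    · intro t ht
      rw [Real.norm_of_nonneg (hε0 t (Ico_subset_Icc_self ht)),
        Real.norm_of_nonneg (hψ0 t (Ico_subset_Icc_self ht))]
      exact hle t (Ico_subset_Icc_self ht)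
  intro t ht
  exact le_antisymm (by simpa [hψ t ht] using hle t ht) (hε0 t ht)

section ExponentialShift

variable {F : Type*} [NormedAddCommGroup F] [NormedSpace ℝ F] [CompleteSpace F]

/-- The integrand is the derivative of `s ↦ e^{-c(t-s)} • Y s`. -/
theorem integral_exp_smul_eq_of_eq_add_integral {Y w : ℝ → F} {y₀ : F} {t : ℝ} (ht : 0 ≤ t)
    (hw : ContinuousOn w (Icc 0 t)) (hY : ∀ s ∈ Icc 0 t, Y s = y₀ + ∫ r in (0 : ℝ)..s, w r)
    (c : ℝ) :
    ∫ s in (0 : ℝ)..t, Real.exp (-(c * (t - s))) • (c • Y s + w s) =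
      Y t - Real.exp (-(c * t)) • y₀ := by
  have hYc : ContinuousOn Y (Icc 0 t) :=
    (continuousOn_const.add ((intervalIntegral.continuousOn_primitive hw.integrableOn_Icc).congr
      fun s hs => intervalIntegral.integral_of_le hs.1)).congr hY
  have hexpc : Continuous fun s => Real.exp (-(c * (t - s))) := by fun_prop
  have hexp (s : ℝ) :
      HasDerivAt (fun s => Real.exp (-(c * (t - s)))) (c * Real.exp (-(c * (t - s)))) s := by
    simpa [mul_comm] using (((hasDerivAt_id s).const_sub t).const_mul c).neg.exp
  have hYd : ∀ s ∈ Ioo 0 t, HasDerivAt Y (w s) s := fun s hs => by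
    have hprim := intervalIntegral.integral_hasDerivAt_right
      ((hw.mono (Icc_subset_Icc_right hs.2.le)).intervalIntegrable_of_Icc hs.1.le)
      ((hw.mono Ioo_subset_Icc_self).stronglyMeasurableAtFilter isOpen_Ioo s hs)
      (hw.continuousAt (Icc_mem_nhds hs.1 hs.2))
    exact (hprim.const_add y₀).congr_of_eventuallyEq <|
      eventually_of_mem (Ioo_mem_nhds hs.1 hs.2) fun r hr => hY r (Ioo_subset_Icc_self hr)
  have hint : IntervalIntegrable (fun s => Real.exp (-(c * (t - s))) • (c • Y s + w s))
      volume 0 t :=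
    (hexpc.continuousOn.smul ((hYc.const_smul c).add hw)).intervalIntegrable_of_Icc ht
  rw [intervalIntegral.integral_eq_sub_of_hasDerivAt_of_le
    (f := fun s => Real.exp (-(c * (t - s))) • Y s) ht (hexpc.continuousOn.smul hYc)
    (fun s hs => ((hexp s).smul (hYd s hs)).congr_deriv (by module)) hint]
  simp [hY 0 ⟨le_rfl, ht⟩]

end ExponentialShift

section Semigroup

variable {X : Type*} [TopologicalSpace X] {S : ℝ → C(X, ℝ) →L[ℝ] C(X, ℝ)}

theorem PositiveSG.monotone (hpos : PositiveSG S) {t : ℝ} (ht : 0 ≤ t) : Monotone (S t) :=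
  fun g h hgh => sub_nonneg.1 <| by simpa using hpos t ht (h - g) (sub_nonneg.2 hgh)

theorem IsSemigroupOn.apply_apply (hsemi : IsSemigroupOn S) {s t : ℝ} (hs : 0 ≤ s) (ht : 0 ≤ t)
    (g : C(X, ℝ)) : S s (S t g) = S (s + t) g := by
  rw [hsemi.2 s t hs ht, ContinuousLinearMap.comp_apply]

variable [CompactSpace X]

theorem PositiveSG.contractiveSG (hpos : PositiveSG S) (hone : ∀ t, 0 ≤ t → S t 1 = 1) :
    ContractiveSG 0 S := by
  intro t ht g
  have hg := (g.norm_le_iff_mem_Icc_smul_one (norm_nonneg g)).1 le_rfl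
  have hSg : S t g ∈ Icc (-(‖g‖ • 1)) (‖g‖ • 1) := by
    simpa [hone t ht] using (hpos.monotone ht).mapsTo_Icc hg
  simpa using ((S t g).norm_le_iff_mem_Icc_smul_one (norm_nonneg g)).2 hSg

theorem ContractiveSG.norm_apply_le (hcontr : ContractiveSG 0 S) {t : ℝ} (ht : 0 ≤ t)
    (g : C(X, ℝ)) : ‖S t g‖ ≤ ‖g‖ := by
  simpa using hcontr t ht g

theorem IsSemigroupOn.norm_apply_sub_apply_le (hsemi : IsSemigroupOn S)
    (hcontr : ContractiveSG 0 S) {s t : ℝ} (hs : 0 ≤ s) (ht : 0 ≤ t) (g : C(X, ℝ)) :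
    ‖S t g - S s g‖ ≤ ‖S |t - s| g - g‖ := by
  wlog hst : s ≤ t generalizing s t
  · rw [norm_sub_rev, abs_sub_comm]
    exact this ht hs (le_of_not_ge hst)
  have hsplit : S t g - S s g = S s (S |t - s| g - g) := by
    rw [map_sub, hsemi.apply_apply hs (abs_nonneg _), abs_of_nonneg (sub_nonneg.2 hst),
      add_sub_cancel]
  rw [hsplit]
  exact hcontr.norm_apply_le hs _

theorem IsSemigroupOn.continuousOn_apply (hsemi : IsSemigroupOn S)
    (hscont : StronglyContinuousSG S) (hcontr : ContractiveSG 0 S) (g : C(X, ℝ)) :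
    ContinuousOn (fun t => S t g) (Ici 0) := by
  have hzero : ContinuousWithinAt (fun t => S t g) (Ici 0) 0 := by
    rw [← continuousWithinAt_Ioi_iff_Ici, ContinuousWithinAt, hsemi.1]
    exact hscont g
  intro t ht
  have hdist : Tendsto (fun s => |s - t|) (𝓝[Ici 0] t) (𝓝[Ici 0] 0) :=
    tendsto_nhdsWithin_iff.2 ⟨by
      simpa using ((continuous_sub_right t).abs.tendsto t).mono_left nhdsWithin_le_nhds,
      Eventually.of_forall fun s => abs_nonneg (s - t)⟩
  have hlim := tendsto_iff_norm_sub_tendsto_zero.1 (hzero.tendsto.comp hdist)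
  rw [hsemi.1] at hlim
  exact tendsto_iff_norm_sub_tendsto_zero.2 <| squeeze_zero'
    (Eventually.of_forall fun _ => norm_nonneg _)
    (eventually_nhdsWithin_of_forall fun s hs => hsemi.norm_apply_sub_apply_le hcontr ht hs g)
    hlim

theorem IsSemigroupOn.continuousOn_apply_sub (hsemi : IsSemigroupOn S)
    (hscont : StronglyContinuousSG S) (hcontr : ContractiveSG 0 S) {t : ℝ}
    {w : ℝ → C(X, ℝ)} (hw : ContinuousOn w (Icc 0 t)) :
    ContinuousOn (fun s => S (t - s) (w s)) (Icc 0 t) := by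
  intro s₀ hs₀
  have hmaps : MapsTo (fun s => t - s) (Icc 0 t) (Ici 0) := fun s hs => sub_nonneg.2 hs.2
  have hS : ContinuousWithinAt (fun s => S (t - s) (w s₀)) (Icc 0 t) s₀ :=
    (hsemi.continuousOn_apply hscont hcontr (w s₀) _ (hmaps hs₀)).comp
      (continuous_const.sub continuous_id).continuousWithinAt hmaps
  have hbound : ∀ s ∈ Icc 0 t, ‖S (t - s) (w s) - S (t - s₀) (w s₀)‖ ≤
      ‖w s - w s₀‖ + ‖S (t - s) (w s₀) - S (t - s₀) (w s₀)‖ := fun s hs => by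
    calc _ ≤ ‖S (t - s) (w s) - S (t - s) (w s₀)‖ + ‖S (t - s) (w s₀) - S (t - s₀) (w s₀)‖ :=
          norm_sub_le_norm_sub_add_norm_sub _ _ _
      _ ≤ _ := by
          rw [← map_sub]
          gcongr
          exact hcontr.norm_apply_le (hmaps hs) _
  refine tendsto_iff_norm_sub_tendsto_zero.2 <| squeeze_zero'
    (Eventually.of_forall fun _ => norm_nonneg _) (eventually_nhdsWithin_of_forall hbound) ?_
  simpa using (tendsto_iff_norm_sub_tendsto_zero.1 (hw s₀ hs₀)).add
    (tendsto_iff_norm_sub_tendsto_zero.1 hS)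

theorem integral_exp_smul_const_eq (c : ℝ) {t : ℝ} (ht : 0 ≤ t) (y : C(X, ℝ)) :
    ∫ s in (0 : ℝ)..t, Real.exp (-(c * (t - s))) • c • y = y - Real.exp (-(c * t)) • y := by
  simpa using integral_exp_smul_eq_of_eq_add_integral (Y := fun _ => y) (w := 0) ht
    continuousOn_const (by simp) c

theorem exp_smul_add_integral_mem_Icc (hpos : PositiveSG S) (hone : ∀ t, 0 ≤ t → S t 1 = 1)
    {c t : ℝ} (ht : 0 ≤ t) {f : C(X, ℝ)} (hf : f ∈ Icc 0 1) {h : ℝ → C(X, ℝ)}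
    (hSh : ContinuousOn (fun s => S (t - s) (h s)) (Icc 0 t))
    (hh : ∀ s ∈ Icc 0 t, h s ∈ Icc 0 (c • 1)) :
    Real.exp (-(c * t)) • S t f + ∫ s in (0 : ℝ)..t, Real.exp (-(c * (t - s))) • S (t - s) (h s)
      ∈ Icc 0 1 := by
  have hexp : Continuous fun s => Real.exp (-(c * (t - s))) := by fun_prop
  have hSh_le : ∀ s ∈ Icc 0 t, S (t - s) (h s) ≤ c • 1 := fun s hs => by
    simpa [hone (t - s) (sub_nonneg.2 hs.2)] using
      hpos.monotone (sub_nonneg.2 hs.2) (hh s hs).2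
  constructor
  · refine add_nonneg (smul_nonneg (Real.exp_nonneg _) (hpos t ht f hf.1))
      (intervalIntegral_nonneg_of_forall_mem ht fun s hs => smul_nonneg (Real.exp_nonneg _) ?_)
    exact hpos _ (sub_nonneg.2 hs.2) _ (hh s hs).1
  · calc _ ≤ Real.exp (-(c * t)) • (1 : C(X, ℝ)) +
          ∫ s in (0 : ℝ)..t, Real.exp (-(c * (t - s))) • c • (1 : C(X, ℝ)) := by
          gcongr
          · simpa [hone t ht] using hpos.monotone ht hf.2
          · exact intervalIntegral_mono_of_forall_mem ht
              ((hexp.continuousOn.smul hSh).intervalIntegrable_of_Icc ht)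
              ((hexp.smul continuous_const).intervalIntegrable 0 t)
              fun s hs => smul_le_smul_of_nonneg_left (hSh_le s hs) (Real.exp_nonneg _)
      _ = 1 := by rw [integral_exp_smul_const_eq c ht]; abel

end Semigroup

section Reaction

variable {X : Type*} [TopologicalSpace X] [CompactSpace X]

def shiftedReaction (a b : C(X, ℝ)) (c : ℝ) (y : C(X, ℝ)) : C(X, ℝ) :=
  c • y + (b * y - a * y ^ 2)

theorem continuous_shiftedReaction (a b : C(X, ℝ)) (c : ℝ) :
    Continuous (shiftedReaction a b c) := by
  unfold shiftedReaction
  fun_prop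

theorem reaction_mem_Icc {a b c y : ℝ} (ha : 0 ≤ a) (hba : b ≤ a) (hac : a ≤ c)
    (habc : a - b ≤ c) (hy : y ∈ Icc (0 : ℝ) 1) : c * y + (b * y - a * y ^ 2) ∈ Icc 0 c := by
  obtain ⟨hy0, hy1⟩ := hy
  constructor
  · nlinarith [mul_le_mul_of_nonneg_left hy1 ha]
  · nlinarith [mul_le_mul_of_nonneg_left hy1 ha, mul_nonneg hy0 (sub_nonneg.2 hy1)]

theorem shiftedReaction_mem_Icc {a b y : C(X, ℝ)} (ha : 0 ≤ a) (hba : b ≤ a)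
    (hy : y ∈ Icc 0 1) : shiftedReaction a b (‖a‖ + ‖b‖) y ∈ Icc 0 ((‖a‖ + ‖b‖) • 1) := by
  have hmem : ∀ x, shiftedReaction a b (‖a‖ + ‖b‖) y x ∈ Icc 0 (‖a‖ + ‖b‖) := fun x => by
    have hax := (le_abs_self (a x)).trans (a.norm_coe_le_norm x)
    have hbx := (neg_le_abs (b x)).trans (b.norm_coe_le_norm x)
    exact reaction_mem_Icc (ha x) (hba x) (by linarith [norm_nonneg b]) (by linarith)
      ⟨hy.1 x, hy.2 x⟩
  exact ⟨fun x => by simpa using (hmem x).1, fun x => by simpa using (hmem x).2⟩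

theorem norm_shiftedReaction_sub_le (a b : C(X, ℝ)) (c : ℝ) (y z : C(X, ℝ)) :
    ‖shiftedReaction a b c y - shiftedReaction a b c z‖ ≤
      (|c| + ‖b‖ + ‖a‖ * (‖y‖ + ‖z‖)) * ‖y - z‖ := by
  have hfactor : shiftedReaction a b c y - shiftedReaction a b c z =
      c • (y - z) + (b - a * (y + z)) * (y - z) := by
    simp only [shiftedReaction, smul_sub]
    ring
  calc _ ≤ ‖c • (y - z)‖ + ‖b - a * (y + z)‖ * ‖y - z‖ := by
        rw [hfactor]
        grw [norm_add_le, norm_mul_le]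
    _ ≤ |c| * ‖y - z‖ + (‖b‖ + ‖a‖ * (‖y‖ + ‖z‖)) * ‖y - z‖ := by
        rw [norm_smul, Real.norm_eq_abs]
        gcongr
        grw [norm_sub_le, norm_mul_le, norm_add_le]
    _ = _ := by ring

theorem ContractiveSG.norm_exp_smul_shiftedReaction_sub_le {S : ℝ → C(X, ℝ) →L[ℝ] C(X, ℝ)}
    (hcontr : ContractiveSG 0 S) {a b : C(X, ℝ)} {c s t : ℝ} (hc : 0 ≤ c) (hst : s ≤ t)
    (y z : C(X, ℝ)) :
    ‖Real.exp (-(c * (t - s))) • S (t - s) (shiftedReaction a b c y) -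
        Real.exp (-(c * (t - s))) • S (t - s) (shiftedReaction a b c z)‖ ≤
      (c + ‖b‖ + ‖a‖ * (‖y‖ + ‖z‖)) * ‖y - z‖ := by
  have hts : 0 ≤ t - s := sub_nonneg.2 hst
  calc _ = Real.exp (-(c * (t - s))) *
        ‖S (t - s) (shiftedReaction a b c y - shiftedReaction a b c z)‖ := by
        rw [← smul_sub, ← map_sub, norm_smul, Real.norm_of_nonneg (Real.exp_nonneg _)]
    _ ≤ 1 * ‖shiftedReaction a b c y - shiftedReaction a b c z‖ :=
        mul_le_mul (Real.exp_le_one_iff.2 (neg_nonpos.2 (mul_nonneg hc hts)))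
          (hcontr.norm_apply_le hts _) (norm_nonneg _) zero_le_one
    _ ≤ _ := by
        simpa [abs_of_nonneg hc] using norm_shiftedReaction_sub_le a b c y z

end Reaction

namespace IsMildSolution

variable {X : Type*} [TopologicalSpace X] [CompactSpace X] {S : ℝ → C(X, ℝ) →L[ℝ] C(X, ℝ)}
  {a b f : C(X, ℝ)} {u : ℝ → C(X, ℝ)}

theorem eq_exp_smul_add_integral (hsemi : IsSemigroupOn S) (hscont : StronglyContinuousSG S)
    (hcontr : ContractiveSG 0 S) (hu : IsMildSolution S a b f u) (c : ℝ) {t : ℝ} (ht : 0 ≤ t) :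
    u t = Real.exp (-(c * t)) • S t f +
      ∫ s in (0 : ℝ)..t, Real.exp (-(c * (t - s))) • S (t - s) (shiftedReaction a b c (u s)) := by
  set g : ℝ → C(X, ℝ) := fun s => b * u s - a * u s ^ 2
  have hg : ContinuousOn g (Icc 0 t) := by
    have hu' : ContinuousOn u (Icc 0 t) := hu.1.mono Icc_subset_Ici_self
    fun_prop
  have hY : ∀ s ∈ Icc 0 t, S (t - s) (u s) = S t f + ∫ r in (0 : ℝ)..s, S (t - r) (g r) := by
    intro s hs
    have hts : 0 ≤ t - s := sub_nonneg.2 hs.2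
    rw [hu.2 s hs.1, map_add, hsemi.apply_apply hts hs.1, sub_add_cancel,
      ← ContinuousLinearMap.intervalIntegral_comp_comm _
        ((hsemi.continuousOn_apply_sub hscont hcontr (hg.mono (Icc_subset_Icc_right hs.2))
          ).intervalIntegrable_of_Icc hs.1)]
    congr 1
    refine intervalIntegral.integral_congr fun r hr => ?_
    rw [uIcc_of_le hs.1] at hr
    simp only [hsemi.apply_apply hts (sub_nonneg.2 hr.2), sub_add_sub_cancel]
  have key := integral_exp_smul_eq_of_eq_add_integral ht
    (hsemi.continuousOn_apply_sub hscont hcontr hg) hY c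
  rw [sub_self, hsemi.1, ContinuousLinearMap.id_apply] at key
  simp only [shiftedReaction, map_add, map_smul]
  rw [key]
  abel

theorem exists_norm_sub_clampUnit_le_mul_integral (hsemi : IsSemigroupOn S)
    (hscont : StronglyContinuousSG S) (hpos : PositiveSG S) (hone : ∀ t, 0 ≤ t → S t 1 = 1)
    (ha : 0 ≤ a) (hba : b ≤ a) (hf : f ∈ Icc 0 1) (hu : IsMildSolution S a b f u) (T : ℝ) :
    ∃ K, ∀ t ∈ Icc 0 T, ‖u t - ContinuousMap.clampUnit (u t)‖ ≤
      K * ∫ s in (0 : ℝ)..t, ‖u s - ContinuousMap.clampUnit (u s)‖ := by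
  have hcontr := hpos.contractiveSG hone
  obtain ⟨B, hB⟩ := isCompact_Icc.exists_bound_of_continuousOn
    (hu.1.mono (Icc_subset_Ici_self : Icc 0 T ⊆ Ici 0))
  set c := ‖a‖ + ‖b‖
  set K := c + ‖b‖ + ‖a‖ * (B + 1) with hK
  set v := fun s => ContinuousMap.clampUnit (u s)
  refine ⟨K, fun t ht => ?_⟩
  have hu_t : ContinuousOn u (Icc 0 t) := hu.1.mono Icc_subset_Ici_self
  have hv_t : ContinuousOn v (Icc 0 t) :=
    ContinuousMap.continuous_clampUnit.comp_continuousOn hu_t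
  have hexp : Continuous fun s => Real.exp (-(c * (t - s))) := by fun_prop
  have hSΦ : ∀ y : ℝ → C(X, ℝ), ContinuousOn y (Icc 0 t) →
      ContinuousOn (fun s => S (t - s) (shiftedReaction a b c (y s))) (Icc 0 t) := fun y hy =>
    hsemi.continuousOn_apply_sub hscont hcontr
      ((continuous_shiftedReaction a b c).comp_continuousOn hy)
  have hint : ∀ y : ℝ → C(X, ℝ), ContinuousOn y (Icc 0 t) → IntervalIntegrable
      (fun s => Real.exp (-(c * (t - s))) • S (t - s) (shiftedReaction a b c (y s))) volume 0 t :=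
    fun y hy => (hexp.continuousOn.smul (hSΦ y hy)).intervalIntegrable_of_Icc ht.1
  set z := Real.exp (-(c * t)) • S t f +
    ∫ s in (0 : ℝ)..t, Real.exp (-(c * (t - s))) • S (t - s) (shiftedReaction a b c (v s))
  have hz : z ∈ Icc 0 1 := exp_smul_add_integral_mem_Icc hpos hone ht.1 hf (hSΦ v hv_t)
    fun s _ => shiftedReaction_mem_Icc ha hba (ContinuousMap.clampUnit_mem_Icc _)
  calc ‖u t - v t‖ ≤ ‖u t - z‖ := ContinuousMap.norm_sub_clampUnit_le hz
    _ = ‖∫ s in (0 : ℝ)..t,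
          (Real.exp (-(c * (t - s))) • S (t - s) (shiftedReaction a b c (u s)) -
            Real.exp (-(c * (t - s))) • S (t - s) (shiftedReaction a b c (v s)))‖ := by
        rw [intervalIntegral.integral_sub (hint u hu_t) (hint v hv_t),
          hu.eq_exp_smul_add_integral hsemi hscont hcontr c ht.1, add_sub_add_left_eq_sub]
    _ ≤ ∫ s in (0 : ℝ)..t, K * ‖u s - v s‖ := by
        refine intervalIntegral.norm_integral_le_of_norm_le ht.1 (ae_of_all _ fun s hs => ?_)
          ((continuousOn_const.mul (hu_t.sub hv_t).norm).intervalIntegrable_of_Icc ht.1)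
        refine (hcontr.norm_exp_smul_shiftedReaction_sub_le (by positivity) hs.2 _ _).trans ?_
        rw [hK]
        gcongr
        · exact hB s ⟨hs.1.le, hs.2.trans ht.2⟩
        · exact ContinuousMap.norm_clampUnit_le_one _
    _ = K * ∫ s in (0 : ℝ)..t, ‖u s - v s‖ := intervalIntegral.integral_const_mul _ _

end IsMildSolution

theorem statement16_general (S : ℝ → C(E, ℝ) →L[ℝ] C(E, ℝ))
    (hS : IsFellerSG S)
    (α β : C(E, ℝ)) (hα : 0 ≤ α) (hβα : β ≤ α)
    (f : C(E, ℝ)) (hf0 : 0 ≤ f) (hf1 : f ≤ 1)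
    (u : ℝ → C(E, ℝ)) (hu : IsMildSolution S α β f u) :
    ∀ t ∈ Ici (0 : ℝ), 0 ≤ u t ∧ u t ≤ 1 := by
  obtain ⟨hsemi, hscont, hpos, hone⟩ := hS
  intro T hT
  obtain ⟨K, hK⟩ := hu.exists_norm_sub_clampUnit_le_mul_integral hsemi hscont hpos hone hα hβα
    ⟨hf0, hf1⟩ T
  have hu_T : ContinuousOn u (Icc 0 T) := hu.1.mono Icc_subset_Ici_self
  have hdist : ‖u T - ContinuousMap.clampUnit (u T)‖ = 0 := eqOn_zero_of_le_mul_integral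
    (hu_T.sub (ContinuousMap.continuous_clampUnit.comp_continuousOn hu_T)).norm
    (fun _ _ => norm_nonneg _) hK ⟨hT, le_rfl⟩
  rw [sub_eq_zero.1 (norm_eq_zero.1 hdist)]
  exact ContinuousMap.clampUnit_mem_Icc _

/-- Used in the proof of Lemma 1: if `β ≤ α` and `0 ≤ f ≤ 1`, then the mild solution of
`∂u/∂t = G u + β u - α u²`, `u 0 = f`, satisfies `0 ≤ u t ≤ 1` for all `t ≥ 0`. -/
theorem statement16 (S : ℝ → C(E, ℝ) →L[ℝ] C(E, ℝ))
    (D : Set C(E, ℝ)) (G : C(E, ℝ) → C(E, ℝ))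
    (hS : IsFellerSG S) (hgen : IsGeneratorOf S D G)
    (α β : C(E, ℝ)) (hα : 0 ≤ α) (hβα : β ≤ α)
    (f : C(E, ℝ)) (hf0 : 0 ≤ f) (hf1 : f ≤ 1)
    (u : ℝ → C(E, ℝ)) (hu : IsMildSolution S α β f u) :
    ∀ t ∈ Ici (0 : ℝ), 0 ≤ u t ∧ u t ≤ 1 :=
  statement16_general S hS α β hα hβα f hf0 hf1 u hu
end
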